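/- arXiv:2303.12960 — 3 statements merged into one kernel-verified Lean document; each statement's English description precedes it below -/
import Mathlib

section
/- Let U ⊂ ℝ^m be open, γ ∈ (0,1], and f ∈ C^{0,γ}(U, ℝ^d), i.e. |f(a)−f(b)| ≤ C|a−b|^γ on U. Let κ : ℝ^d → Λ^k((ℝ^d)^*) be a bounded (measurable) k-form on ℝ^d with ‖κ‖_∞ := sup_{p} ‖κ(p)‖ < ∞. Suppose the closed ball B(x_o, 2r) is contained in U. Then there is a constant C depending only on m, d, k and the mollifier φ such that for all 0 < ε < r, sup_{x ∈ B(x_o,r)} ‖(f_ε^*κ)(x)‖ ≤ C ‖κ‖_∞ · ([f]_{γ,ε,B(x_o,2r)})^k · ε^{k(γ−1)}, where (f_ε^*κ)(x) denotes the alternating k-form (v_1,…,v_k) ↦ κ(f_ε(x))(Df_ε(x)v_1,…,Df_ε(x)v_k). -/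
/-!
Statement 5: if `f ∈ C^{0,γ}(U, ℝ^d)`, `κ` is a bounded (measurable) `k`-form on
`ℝ^d`, and the closed ball `B(x_o, 2r) ⊆ U`, then for `0 < ε < r`,
`‖f_ε^*κ‖_{L^∞(B(x_o,r))} ≤ C ‖κ‖_∞ [f]_{γ,ε,B(x_o,2r)}^k ε^{k(γ-1)}`,
where `C` depends only on `m`, `d`, `k` and the mollifier `φ`.

A `k`-form on `ℝ^d` is modelled as a map from `ℝ^d` into the continuous
(automatically, in finite dimensions) `k`-linear alternating forms on `ℝ^d`,
and the pullback `(f_ε^*κ)(x)` is the alternating `k`-form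
`(v_1,…,v_k) ↦ κ(f_ε x)(Df_ε(x)v_1, …, Df_ε(x)v_k)`.
-/

noncomputable section

open MeasureTheory

/-- Mollification `f_ε = f * φ_ε` where `φ_ε(x) = ε^{-m} φ(x/ε)`; since `φ_ε` is
supported in the closed ball of radius `ε`, the convolution integral is taken
over that ball. -/
def mollify {m d : ℕ} (φ : EuclideanSpace ℝ (Fin m) → ℝ) (ε : ℝ)
    (f : EuclideanSpace ℝ (Fin m) → EuclideanSpace ℝ (Fin d))
    (x : EuclideanSpace ℝ (Fin m)) : EuclideanSpace ℝ (Fin d) :=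
  ∫ z in Metric.closedBall (0 : EuclideanSpace ℝ (Fin m)) ε,
    ((ε ^ m)⁻¹ * φ (ε⁻¹ • z)) • f (x - z)

/-- The Hölder seminorm
`[f]_{γ,ε,V} = sup { |f a - f b| / |a-b|^γ : a, b ∈ V, 0 < |a-b| ≤ ε }`. -/
def holderSemi {m d : ℕ} (γ ε : ℝ) (V : Set (EuclideanSpace ℝ (Fin m)))
    (f : EuclideanSpace ℝ (Fin m) → EuclideanSpace ℝ (Fin d)) : ℝ :=
  sSup ((fun ab : EuclideanSpace ℝ (Fin m) × EuclideanSpace ℝ (Fin m) =>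
      dist (f ab.1) (f ab.2) / dist ab.1 ab.2 ^ γ) ''
    {ab | ab.1 ∈ V ∧ ab.2 ∈ V ∧ 0 < dist ab.1 ab.2 ∧ dist ab.1 ab.2 ≤ ε})

/-- A Hölder-type bound on an open set implies continuity at its points. -/
lemma holder_continuousAt {m d : ℕ} {U : Set (EuclideanSpace ℝ (Fin m))} (hU : IsOpen U)
    {γ C' : ℝ} (hγ : 0 < γ) {f : EuclideanSpace ℝ (Fin m) → EuclideanSpace ℝ (Fin d)}
    (hf : ∀ a ∈ U, ∀ b ∈ U, dist (f a) (f b) ≤ C' * dist a b ^ γ)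
    {a : EuclideanSpace ℝ (Fin m)} (ha : a ∈ U) : ContinuousAt f a := by
  rw [ContinuousAt, tendsto_iff_dist_tendsto_zero]
  apply squeeze_zero' (Filter.Eventually.of_forall fun _ => dist_nonneg)
    (Filter.eventually_of_mem (hU.mem_nhds ha) fun b hb => hf b hb a ha)
  have h0 : Filter.Tendsto (fun b => dist b a) (nhds a) (nhds 0) := by
    simpa using (continuous_id.dist (continuous_const (y := a))).tendsto a
  have h1 : Filter.Tendsto (fun t : ℝ => C' * t ^ γ) (nhds 0) (nhds (C' * (0:ℝ) ^ γ)) :=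
    (continuousAt_const.mul (Real.continuousAt_rpow_const 0 γ (Or.inr hγ.le)))
  have h2 := h1.comp h0
  simpa [Function.comp_def, Real.zero_rpow hγ.ne'] using h2

set_option maxHeartbeats 2000000 in
theorem statement5 (m d k : ℕ)
    -- the standard mollifier `φ`
    (φ : EuclideanSpace ℝ (Fin m) → ℝ) (hφ_smooth : ContDiff ℝ (⊤ : ℕ∞) φ)
    (hφ_supp : Function.support φ ⊆ Metric.closedBall 0 1)
    (hφ_int : ∫ x, φ x = 1) :
    -- a constant depending only on `m`, `d`, `k` and `φ`
    ∃ C : ℝ, 0 < C ∧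
      ∀ (U : Set (EuclideanSpace ℝ (Fin m))), IsOpen U →
      ∀ γ : ℝ, 0 < γ → γ ≤ 1 →
      ∀ f : EuclideanSpace ℝ (Fin m) → EuclideanSpace ℝ (Fin d),
      -- `f ∈ C^{0,γ}(U, ℝ^d)`
      (∃ C' : ℝ, ∀ a ∈ U, ∀ b ∈ U, dist (f a) (f b) ≤ C' * dist a b ^ γ) →
      -- `κ` is a bounded measurable `k`-form on `ℝ^d`
      ∀ κ : EuclideanSpace ℝ (Fin d) →
        ContinuousMultilinearMap ℝ (fun _ : Fin k => EuclideanSpace ℝ (Fin d)) ℝ,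
      (∀ p (v : Fin k → EuclideanSpace ℝ (Fin d)) (i j : Fin k),
        i ≠ j → v i = v j → κ p v = 0) →
      (∀ v : Fin k → EuclideanSpace ℝ (Fin d), Measurable fun p => κ p v) →
      BddAbove (Set.range fun p => ‖κ p‖) →
      ∀ (x_o : EuclideanSpace ℝ (Fin m)) (r : ℝ),
        Metric.closedBall x_o (2 * r) ⊆ U →
      ∀ ε : ℝ, 0 < ε → ε < r →
      ∀ x ∈ Metric.closedBall x_o r,
        ‖(κ (mollify φ ε f x)).compContinuousLinearMap
            (fun _ => fderiv ℝ (mollify φ ε f) x)‖ ≤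
          C * sSup (Set.range fun p => ‖κ p‖) *
            holderSemi γ ε (Metric.closedBall x_o (2 * r)) f ^ k *
            ε ^ ((k : ℝ) * (γ - 1)) := by
  classical
  have hφc : HasCompactSupport φ :=
    HasCompactSupport.of_support_subset_isCompact (isCompact_closedBall 0 1) hφ_supp
  have hφcont : Continuous φ := hφ_smooth.continuous
  set Φ : EuclideanSpace ℝ (Fin m) → (EuclideanSpace ℝ (Fin m) →L[ℝ] ℝ) := fderiv ℝ φ
    with hΦdef
  have hΦcont : Continuous Φ := hφ_smooth.continuous_fderiv (by simp)
  have hΦc : HasCompactSupport Φ := hφc.fderiv (𝕜 := ℝ)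
  obtain ⟨Mφ, hMφ⟩ : ∃ Mφ, ∀ w, ‖Φ w‖ ≤ Mφ := hΦc.exists_bound_of_continuous hΦcont
  have hMφ0 : 0 ≤ Mφ := (norm_nonneg _).trans (hMφ 0)
  set I₁ : ℝ := ∫ z, ‖Φ z‖ with hI₁def
  have hI₁int : Integrable (fun z => ‖Φ z‖) :=
    hΦcont.norm.integrable_of_hasCompactSupport hΦc.norm
  have hI₁0 : 0 ≤ I₁ := integral_nonneg fun z => norm_nonneg _
  refine ⟨(1 + I₁) ^ k, pow_pos (by linarith) k, ?_⟩
  intro U hU γ hγ hγ1 f hfHolder κ hκalt hκmeas hκbdd x_o r hball ε hε hεr x hx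
  obtain ⟨C', hC'⟩ := hfHolder
  have hr : 0 < r := hε.trans hεr
  set B2 := Metric.closedBall x_o (2 * r) with hB2def
  set Hf := holderSemi γ ε B2 f with hHfdef
  set S := sSup (Set.range fun p => ‖κ p‖) with hSdef
  have hfc : ∀ a ∈ U, ContinuousAt f a := fun a ha => holder_continuousAt hU hγ hC' ha
  -- basic facts about the Hölder seminorm
  have hHfBdd : BddAbove ((fun ab : EuclideanSpace ℝ (Fin m) × EuclideanSpace ℝ (Fin m) =>
      dist (f ab.1) (f ab.2) / dist ab.1 ab.2 ^ γ) ''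
      {ab | ab.1 ∈ B2 ∧ ab.2 ∈ B2 ∧ 0 < dist ab.1 ab.2 ∧ dist ab.1 ab.2 ≤ ε}) := by
    refine ⟨max C' 0, ?_⟩
    rintro q ⟨⟨a, b⟩, ⟨haB, hbB, hd0, hdε⟩, rfl⟩
    have hpow : (0:ℝ) < dist a b ^ γ := Real.rpow_pos_of_pos hd0 γ
    exact le_max_of_le_left ((div_le_iff₀ hpow).2 (hC' a (hball haB) b (hball hbB)))
  have hHf0 : 0 ≤ Hf := by
    apply Real.sSup_nonneg
    rintro q ⟨⟨a, b⟩, -, rfl⟩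
    exact div_nonneg dist_nonneg (Real.rpow_nonneg dist_nonneg γ)
  have hkey : ∀ a b, a ∈ B2 → b ∈ B2 → dist a b ≤ ε → dist (f a) (f b) ≤ Hf * ε ^ γ := by
    intro a b ha hb hab
    rcases eq_or_ne a b with rfl | hne
    · simpa using mul_nonneg hHf0 (Real.rpow_nonneg hε.le γ)
    · have hd0 : 0 < dist a b := dist_pos.2 hne
      have hq : dist (f a) (f b) / dist a b ^ γ ≤ Hf :=
        le_csSup hHfBdd ⟨(a, b), ⟨ha, hb, hd0, hab⟩, rfl⟩
      have hpow : (0:ℝ) < dist a b ^ γ := Real.rpow_pos_of_pos hd0 γ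
      calc dist (f a) (f b) = dist (f a) (f b) / dist a b ^ γ * dist a b ^ γ :=
            (div_mul_cancel₀ _ hpow.ne').symm
        _ ≤ Hf * dist a b ^ γ := mul_le_mul_of_nonneg_right hq hpow.le
        _ ≤ Hf * ε ^ γ :=
            mul_le_mul_of_nonneg_left (Real.rpow_le_rpow dist_nonneg hab hγ.le) hHf0
  -- the rescaled mollifier and its derivative
  set φε : EuclideanSpace ℝ (Fin m) → ℝ := fun w => (ε ^ m)⁻¹ * φ (ε⁻¹ • w) with hφεdef
  set Dφε : EuclideanSpace ℝ (Fin m) → (EuclideanSpace ℝ (Fin m) →L[ℝ] ℝ) :=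
    fun w => ((ε ^ m)⁻¹ * ε⁻¹) • Φ (ε⁻¹ • w) with hDφεdef
  have hεm : (0:ℝ) < (ε ^ m)⁻¹ := by positivity
  have hφεcont : Continuous φε := by
    rw [hφεdef]; exact continuous_const.mul (hφcont.comp (continuous_const_smul ε⁻¹))
  have hDφε_cont : Continuous Dφε := by
    rw [hDφεdef]; exact ((hΦcont.comp (continuous_const_smul ε⁻¹)).const_smul ((ε ^ m)⁻¹ * ε⁻¹))
  have hφε_deriv : ∀ w, HasFDerivAt φε (Dφε w) w := by
    intro w
    have h1 : HasFDerivAt (fun y : EuclideanSpace ℝ (Fin m) => ε⁻¹ • y)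
        (ε⁻¹ • ContinuousLinearMap.id ℝ (EuclideanSpace ℝ (Fin m))) w :=
      (hasFDerivAt_id w).const_smul ε⁻¹
    have h2 : HasFDerivAt φ (Φ (ε⁻¹ • w)) (ε⁻¹ • w) :=
      ((hφ_smooth.differentiable (by simp)) (ε⁻¹ • w)).hasFDerivAt
    have h3 := (h2.comp w h1).const_mul ((ε ^ m)⁻¹)
    refine h3.congr_fderiv ?_
    ext v
    simp [hDφεdef, smul_smul, ContinuousLinearMap.smul_apply, mul_comm, mul_assoc, mul_left_comm]
  have hsupp' : ∀ w : EuclideanSpace ℝ (Fin m), ε < ‖w‖ → φ (ε⁻¹ • w) = 0 := by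
    intro w hw
    by_contra h
    have hmem := hφ_supp (Function.mem_support.2 h)
    rw [Metric.mem_closedBall, dist_zero_right, norm_smul, norm_inv, Real.norm_eq_abs,
      abs_of_pos hε, ← div_eq_inv_mul, div_le_one hε] at hmem
    linarith
  have hφε0 : ∀ w, ε < ‖w‖ → φε w = 0 := fun w hw => by
    rw [hφεdef]; simp [hsupp' w hw]
  have hDφε0 : ∀ w, ε < ‖w‖ → Dφε w = 0 := by
    intro w hw
    have hp : (1:ℝ) < ‖ε⁻¹ • w‖ := by
      rw [norm_smul, norm_inv, Real.norm_eq_abs, abs_of_pos hε, ← div_eq_inv_mul,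
        one_lt_div hε]
      exact hw
    have hev : φ =ᶠ[nhds (ε⁻¹ • w)] fun _ => 0 := by
      refine Filter.eventuallyEq_of_mem
        ((isOpen_lt continuous_const continuous_norm).mem_nhds hp) (fun y hy => ?_)
      by_contra h
      have := hφ_supp (Function.mem_support.2 h)
      rw [Metric.mem_closedBall, dist_zero_right] at this
      exact absurd hy (not_lt.2 this)
    have hz : Φ (ε⁻¹ • w) = 0 := by
      rw [hΦdef, hev.fderiv_eq]
      exact fderiv_const_apply 0
    rw [hDφεdef]
    simp only [hz, smul_zero]
  have hDφε_norm : ∀ w, ‖Dφε w‖ = (ε ^ m)⁻¹ * ε⁻¹ * ‖Φ (ε⁻¹ • w)‖ := by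
    intro w
    have : Dφε w = ((ε ^ m)⁻¹ * ε⁻¹) • Φ (ε⁻¹ • w) := by rw [hDφεdef]
    rw [this, norm_smul ((ε ^ m)⁻¹ * ε⁻¹) (Φ (ε⁻¹ • w)), Real.norm_eq_abs, abs_of_pos (by positivity)]
  -- the integral of ‖Dφε‖
  have hDφεnormint : Integrable (fun w => ‖Dφε w‖) := by
    refine hDφε_cont.norm.integrable_of_hasCompactSupport ?_
    refine HasCompactSupport.of_support_subset_isCompact
      (isCompact_closedBall (0 : EuclideanSpace ℝ (Fin m)) ε) ?_
    intro w hw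
    rw [Function.mem_support] at hw
    by_contra h
    rw [Metric.mem_closedBall, dist_zero_right, not_le] at h
    exact hw (by rw [hDφε0 w h, norm_zero])
  have hIDφε : (∫ w, ‖Dφε w‖) = ε⁻¹ * I₁ := by
    have hcalc : (∫ w, ‖Dφε w‖) = (ε ^ m)⁻¹ * ε⁻¹ * ∫ w, ‖Φ (ε⁻¹ • w)‖ := by
      rw [← integral_const_mul]
      exact integral_congr_ae (Filter.Eventually.of_forall fun w => hDφε_norm w)
    rw [hcalc, Measure.integral_comp_smul volume (fun z => ‖Φ z‖) ε⁻¹]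
    have hfr : Module.finrank ℝ (EuclideanSpace ℝ (Fin m)) = m := finrank_euclideanSpace_fin
    rw [hfr, smul_eq_mul, inv_pow, inv_inv, abs_of_pos (by positivity)]
    have hεm' : (ε:ℝ) ^ m ≠ 0 := pow_ne_zero m hε.ne'
    field_simp
    ring
  -- geometry
  set δ : ℝ := (r - ε) / 2 with hδdef
  have hδ : 0 < δ := by rw [hδdef]; linarith
  set K := Metric.closedBall x (ε + δ) with hKdef
  have hxr : dist x x_o ≤ r := Metric.mem_closedBall.1 hx
  have hx2 : x ∈ B2 := by
    rw [hB2def, Metric.mem_closedBall]; linarith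
  have hKball : ∀ u ∈ K, u ∈ Metric.ball x_o (2 * r) := by
    intro u hu
    rw [hKdef, Metric.mem_closedBall] at hu
    rw [Metric.mem_ball]
    calc dist u x_o ≤ dist u x + dist x x_o := dist_triangle _ _ _
      _ ≤ (ε + δ) + r := add_le_add hu hxr
      _ < 2 * r := by rw [hδdef]; linarith
  set g : EuclideanSpace ℝ (Fin m) → EuclideanSpace ℝ (Fin d) := fun u => f u - f x
    with hgdef
  have hgc : ∀ u ∈ Metric.ball x_o (2 * r), ContinuousAt g u := by
    intro u hu
    have : u ∈ U := hball (Metric.ball_subset_closedBall hu)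
    exact (hfc u this).sub continuousAt_const
  have hgK : ContinuousOn g K := fun u hu => (hgc u (hKball u hu)).continuousWithinAt
  have hgbound : ∀ u, dist u x ≤ ε → ‖g u‖ ≤ Hf * ε ^ γ := by
    intro u hu
    have huB2 : u ∈ B2 := by
      rw [hB2def, Metric.mem_closedBall]
      calc dist u x_o ≤ dist u x + dist x x_o := dist_triangle _ _ _
        _ ≤ ε + r := add_le_add hu hxr
        _ ≤ 2 * r := by linarith
    have h := hkey u x huB2 hx2 hu
    rwa [dist_eq_norm] at h
  obtain ⟨Mg, hMg⟩ := (isCompact_closedBall x (ε + δ)).exists_bound_of_continuousOn hgK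
  have hMg0 : 0 ≤ Mg := (norm_nonneg _).trans
    (hMg x (Metric.mem_closedBall_self (by positivity)))
  -- the localized convolution and its derivative
  set F : EuclideanSpace ℝ (Fin m) → EuclideanSpace ℝ (Fin d) :=
    fun x' => ∫ u in K, φε (x' - u) • g u with hFdef
  set D₀ : EuclideanSpace ℝ (Fin m) →L[ℝ] EuclideanSpace ℝ (Fin d) :=
    ∫ u in K, (Dφε (x - u)).smulRight (g u) with hD₀def
  have hF : HasFDerivAt F D₀ x := by
    rw [hFdef, hD₀def]
    apply hasFDerivAt_integral_of_dominated_of_fderiv_le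
      (F' := fun x' u => (Dφε (x' - u)).smulRight (g u))
      (bound := fun _ => ((ε ^ m)⁻¹ * ε⁻¹ * Mφ) * Mg) (Metric.ball_mem_nhds x hδ)
    · refine Filter.Eventually.of_forall (fun x' => ?_)
      refine ContinuousOn.aestronglyMeasurable ?_ measurableSet_closedBall
      exact ((hφεcont.comp (continuous_const.sub continuous_id)).continuousOn).smul hgK
    · exact ContinuousOn.integrableOn_compact (isCompact_closedBall _ _)
        (((hφεcont.comp (continuous_const.sub continuous_id)).continuousOn).smul hgK)
    · refine ContinuousOn.aestronglyMeasurable ?_ measurableSet_closedBall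
      have hc0 : Continuous fun u : EuclideanSpace ℝ (Fin m) => Dφε (x - u) :=
        hDφε_cont.comp (continuous_const.sub continuous_id)
      have hc1 : ContinuousOn (fun u => (Dφε (x - u), g u)) K := hc0.continuousOn.prodMk hgK
      exact (isBoundedBilinearMap_smulRight (𝕜 := ℝ)).continuous.comp_continuousOn hc1
    · refine (ae_restrict_mem measurableSet_closedBall).mono (fun u hu x' _ => ?_)
      rw [ContinuousLinearMap.norm_smulRight_apply]
      refine mul_le_mul ?_ (hMg u hu) (norm_nonneg _) (by positivity)
      rw [hDφε_norm]
      exact mul_le_mul_of_nonneg_left (hMφ _) (by positivity)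
    · exact integrableOn_const measure_closedBall_lt_top.ne
    · refine Filter.Eventually.of_forall (fun u x' _ => ?_)
      have h1 : HasFDerivAt (fun y : EuclideanSpace ℝ (Fin m) => y - u)
          (ContinuousLinearMap.id ℝ (EuclideanSpace ℝ (Fin m))) x' :=
        (hasFDerivAt_id x').sub_const u
      have h2 := (hφε_deriv (x' - u)).comp x' h1
      rw [ContinuousLinearMap.comp_id] at h2
      exact h2.smul_const (g u)
  -- mollify agrees with F + const near x
  set c₀ : EuclideanSpace ℝ (Fin d) :=
    (∫ z in Metric.closedBall (0 : EuclideanSpace ℝ (Fin m)) ε, φε z) • f x with hc₀def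
  have hmain_eq : ∀ x' ∈ Metric.ball x δ, mollify φ ε f x' = F x' + c₀ := by
    intro x' hx'
    have hx'x : dist x' x < δ := Metric.mem_ball.1 hx'
    -- the fixed-x' integrand, as a function on all of ℝ^m
    set h : EuclideanSpace ℝ (Fin m) → EuclideanSpace ℝ (Fin d) :=
      fun u => φε (x' - u) • g u with hhdef
    have hzero : ∀ u, ε < dist x' u → h u = 0 := by
      intro u hu
      rw [hhdef]
      have : ε < ‖x' - u‖ := by rwa [← dist_eq_norm]
      simp [hφε0 _ this]
    have hnear : ∀ u, dist x' u ≤ ε → u ∈ Metric.ball x_o (2 * r) := by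
      intro u hu
      rw [Metric.mem_ball]
      calc dist u x_o ≤ dist u x' + dist x' x + dist x x_o := dist_triangle4 _ _ _ _
        _ ≤ ε + δ + r := by
            rw [dist_comm u x']
            exact add_le_add (add_le_add hu hx'x.le) hxr
        _ < 2 * r := by rw [hδdef]; linarith
    have hcont_h : Continuous h := by
      rw [continuous_iff_continuousAt]
      intro u
      rcases lt_or_ge ε (dist x' u) with hfar | hclose
      · have hopen : IsOpen {v : EuclideanSpace ℝ (Fin m) | ε < dist x' v} :=
          isOpen_lt continuous_const (continuous_const.dist continuous_id)
        have hev : h =ᶠ[nhds u] fun _ => 0 :=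
          Filter.eventuallyEq_of_mem (hopen.mem_nhds hfar) (fun v hv => hzero v hv)
        exact (continuousAt_congr hev).2 continuousAt_const
      · exact ((hφεcont.comp (continuous_const.sub continuous_id)).continuousAt).smul
          (hgc u (hnear u hclose))
    have hcs_h : HasCompactSupport h := by
      refine HasCompactSupport.of_support_subset_isCompact
        (isCompact_closedBall x' ε) ?_
      intro u hu
      rw [Function.mem_support] at hu
      by_contra hcon
      rw [Metric.mem_closedBall, dist_comm, not_le] at hcon
      exact hu (hzero u hcon)
    have hint_h : Integrable h := hcont_h.integrable_of_hasCompactSupport hcs_h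
    -- splitting the mollification integral
    have hsplit1 : (fun z => φε z • f (x' - z)) =
        fun z => φε z • g (x' - z) + φε z • f x := by
      funext z
      rw [hgdef]
      simp [smul_sub]
    have hint_j1 : IntegrableOn (fun z => φε z • g (x' - z))
        (Metric.closedBall (0 : EuclideanSpace ℝ (Fin m)) ε) := by
      refine ContinuousOn.integrableOn_compact (isCompact_closedBall _ _) ?_
      intro z hz
      have hz' : x' - z ∈ Metric.ball x_o (2 * r) := by
        apply hnear
        rw [Metric.mem_closedBall, dist_zero_right] at hz
        rw [dist_eq_norm]
        simpa using hz
      exact (hφεcont.continuousAt.smul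
        ((hgc _ hz').comp ((continuous_const.sub continuous_id).continuousAt))).continuousWithinAt
    have hint_j2 : IntegrableOn (fun z => φε z • f x)
        (Metric.closedBall (0 : EuclideanSpace ℝ (Fin m)) ε) := by
      refine ContinuousOn.integrableOn_compact (isCompact_closedBall _ _) ?_
      exact (hφεcont.smul continuous_const).continuousOn
    have hml : mollify φ ε f x' =
        (∫ z in Metric.closedBall (0 : EuclideanSpace ℝ (Fin m)) ε, φε z • g (x' - z)) + c₀ := by
      rw [hc₀def, ← integral_smul_const]
      rw [show mollify φ ε f x' = ∫ z in Metric.closedBall (0 : EuclideanSpace ℝ (Fin m)) ε,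
          φε z • f (x' - z) by rw [mollify, hφεdef]]
      rw [hsplit1]
      exact integral_add hint_j1 hint_j2
    -- change of variables
    have hj1h : ∀ z, φε z • g (x' - z) = h (x' - z) := by
      intro z
      rw [hhdef]
      simp
    have hcov : (∫ z in Metric.closedBall (0 : EuclideanSpace ℝ (Fin m)) ε,
        φε z • g (x' - z)) = ∫ u in K, h u := by
      have e1 : (∫ z in Metric.closedBall (0 : EuclideanSpace ℝ (Fin m)) ε,
          φε z • g (x' - z)) = ∫ z, h (x' - z) := by
        rw [show (fun z => φε z • g (x' - z)) = fun z => h (x' - z) from funext hj1h] at hint_j1 ⊢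
        apply setIntegral_eq_integral_of_forall_compl_eq_zero
        intro z hz
        rw [Metric.mem_closedBall, dist_zero_right, not_le] at hz
        apply hzero
        rw [dist_eq_norm]
        simpa using hz
      have e2 : (∫ z, h (x' - z)) = ∫ u, h u := integral_sub_left_eq_self h volume x'
      have e3 : (∫ u, h u) = ∫ u in K, h u := by
        symm
        apply setIntegral_eq_integral_of_forall_compl_eq_zero
        intro u hu
        rw [hKdef, Metric.mem_closedBall, not_le] at hu
        apply hzero
        have : dist u x ≤ dist u x' + dist x' x := dist_triangle _ _ _
        rw [dist_comm x' u]
        linarith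
      rw [e1, e2, e3]
    rw [hml, hcov]
  have heq : mollify φ ε f =ᶠ[nhds x] fun x' => F x' + c₀ :=
    Filter.eventuallyEq_of_mem (Metric.ball_mem_nhds x hδ) hmain_eq
  have hderiv : HasFDerivAt (mollify φ ε f) D₀ x :=
    (hF.add_const c₀).congr_of_eventuallyEq heq
  have hfdval : fderiv ℝ (mollify φ ε f) x = D₀ := hderiv.fderiv
  -- the norm bound on D₀
  have hint_norm : Integrable (fun u => ‖Dφε (x - u)‖) := by
    have hcont : Continuous fun u : EuclideanSpace ℝ (Fin m) => ‖Dφε (x - u)‖ :=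
      (hDφε_cont.comp (continuous_const.sub continuous_id)).norm
    refine hcont.integrable_of_hasCompactSupport ?_
    refine HasCompactSupport.of_support_subset_isCompact (isCompact_closedBall x ε) ?_
    intro u hu
    rw [Function.mem_support] at hu
    by_contra hcon
    rw [Metric.mem_closedBall, not_le] at hcon
    have : ε < ‖x - u‖ := by rwa [← dist_eq_norm, dist_comm]
    exact hu (by rw [hDφε0 _ this, norm_zero])
  have hD₀bound : ‖D₀‖ ≤ I₁ * Hf * ε ^ (γ - 1) := by
    have h1 : ‖D₀‖ ≤ ∫ u in K, ‖(Dφε (x - u)).smulRight (g u)‖ := by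
      rw [hD₀def]; exact norm_integral_le_integral_norm _
    have h2 : (∫ u in K, ‖(Dφε (x - u)).smulRight (g u)‖) ≤
        ∫ u in K, ‖Dφε (x - u)‖ * (Hf * ε ^ γ) := by
      refine setIntegral_mono_on ?_ ?_ measurableSet_closedBall ?_
      · refine ContinuousOn.integrableOn_compact (isCompact_closedBall _ _) ?_
        refine ContinuousOn.norm ?_
        have hc0 : Continuous fun u : EuclideanSpace ℝ (Fin m) => Dφε (x - u) :=
          hDφε_cont.comp (continuous_const.sub continuous_id)
        have hc1 : ContinuousOn (fun u => (Dφε (x - u), g u)) K := hc0.continuousOn.prodMk hgK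
        exact (isBoundedBilinearMap_smulRight (𝕜 := ℝ)).continuous.comp_continuousOn hc1
      · exact (hint_norm.mul_const _).integrableOn
      · intro u hu
        rw [ContinuousLinearMap.norm_smulRight_apply]
        rcases le_or_gt (dist u x) ε with hle | hlt
        · exact mul_le_mul_of_nonneg_left (hgbound u hle) (norm_nonneg _)
        · have hz : Dφε (x - u) = 0 := by
            apply hDφε0
            rwa [← dist_eq_norm, dist_comm]
          rw [hz]
          simp
    have h3 : (∫ u in K, ‖Dφε (x - u)‖ * (Hf * ε ^ γ)) =
        (∫ u in K, ‖Dφε (x - u)‖) * (Hf * ε ^ γ) := integral_mul_const _ _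
    have h4 : (∫ u in K, ‖Dφε (x - u)‖) ≤ ∫ u, ‖Dφε (x - u)‖ :=
      setIntegral_le_integral hint_norm (Filter.Eventually.of_forall fun u => norm_nonneg _)
    have h5 : (∫ u, ‖Dφε (x - u)‖) = ε⁻¹ * I₁ := by
      rw [integral_sub_left_eq_self (fun w => ‖Dφε w‖) volume x, hIDφε]
    have h6 : 0 ≤ Hf * ε ^ γ := mul_nonneg hHf0 (Real.rpow_nonneg hε.le γ)
    have h7 : ε ^ (γ - 1) = ε ^ γ / ε := by
      rw [Real.rpow_sub hε, Real.rpow_one]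
    calc ‖D₀‖ ≤ ∫ u in K, ‖(Dφε (x - u)).smulRight (g u)‖ := h1
      _ ≤ (∫ u in K, ‖Dφε (x - u)‖) * (Hf * ε ^ γ) := by rw [← h3]; exact h2
      _ ≤ (ε⁻¹ * I₁) * (Hf * ε ^ γ) := by
          rw [← h5]
          exact mul_le_mul_of_nonneg_right h4 h6
      _ = I₁ * Hf * ε ^ (γ - 1) := by
          rw [h7]
          field_simp
  -- conclusion
  rw [hfdval]
  set p := mollify φ ε f x with hpdef
  have hcomp : ‖(κ p).compContinuousLinearMap (fun _ : Fin k => D₀)‖ ≤ ‖κ p‖ * ‖D₀‖ ^ k := by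
    have := ContinuousMultilinearMap.norm_compContinuousLinearMap_le (κ p)
      (fun _ : Fin k => D₀)
    simpa [Finset.prod_const, Finset.card_univ] using this
  have hκp : ‖κ p‖ ≤ S := le_csSup hκbdd ⟨p, rfl⟩
  have hS0 : 0 ≤ S := (norm_nonneg _).trans hκp
  have hεpow : 0 < ε ^ (γ - 1) := Real.rpow_pos_of_pos hε _
  have hDk : ‖D₀‖ ^ k ≤ ((1 + I₁) * Hf * ε ^ (γ - 1)) ^ k := by
    apply pow_le_pow_left₀ (norm_nonneg _)
    calc ‖D₀‖ ≤ I₁ * Hf * ε ^ (γ - 1) := hD₀bound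
      _ ≤ (1 + I₁) * Hf * ε ^ (γ - 1) := by
          apply mul_le_mul_of_nonneg_right _ hεpow.le
          exact mul_le_mul_of_nonneg_right (by linarith) hHf0
  have hrpow : ε ^ ((k : ℝ) * (γ - 1)) = (ε ^ (γ - 1)) ^ k := by
    rw [mul_comm, Real.rpow_mul hε.le, Real.rpow_natCast]
  have hrw : ((1 + I₁) * Hf * ε ^ (γ - 1)) ^ k =
      (1 + I₁) ^ k * Hf ^ k * ε ^ ((k : ℝ) * (γ - 1)) := by
    rw [hrpow, mul_pow, mul_pow]
  calc ‖(κ p).compContinuousLinearMap (fun _ : Fin k => D₀)‖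
      ≤ ‖κ p‖ * ‖D₀‖ ^ k := hcomp
    _ ≤ S * ((1 + I₁) ^ k * Hf ^ k * ε ^ ((k : ℝ) * (γ - 1))) := by
        rw [← hrw]
        exact mul_le_mul hκp hDk (pow_nonneg (norm_nonneg _) k) hS0
    _ = (1 + I₁) ^ k * S * Hf ^ k * ε ^ ((k : ℝ) * (γ - 1)) := by ring
end
end

section
/- Every element η ∈ Λ^{n+1}((ℝ^{2n+1})^*) lying in the span of the forms dx_I ∧ dy_J with |I| + |J| = n+1 (i.e. containing no components with dt) can be written uniquely as η = ω' ∧ δ, where ω' = 4∑_{j=1}^n dx_j ∧ dy_j and δ ∈ Λ^{n−1}((ℝ^{2n+1})^*) lies in the span of the forms dx_{I'} ∧ dy_{J'} with |I'| + |J'| = n−1 (i.e. δ contains no components with dt). -/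
/-!
Statement 9: every `η ∈ Λ^{n+1}((ℝ^{2n+1})^*)` lying in the span of the
products `dx_I ∧ dy_J` with `|I| + |J| = n+1` (no components with `dt`) can be
written uniquely as `η = ω' ∧ δ`, where `ω' = 4∑_{j=1}^n dx_j ∧ dy_j` and
`δ ∈ Λ^{n-1}((ℝ^{2n+1})^*)` lies in the span of the products `dx_{I'} ∧ dy_{J'}`
with `|I'| + |J'| = n-1` (no components with `dt`).

Here `Λ^k((ℝ^{2n+1})^*)` is modelled via the exterior algebra of the dual space
`Module.Dual ℝ (Fin (2n+1) → ℝ)`, the wedge product being the multiplication of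
the exterior algebra.
-/

set_option synthInstance.maxHeartbeats 1000000
set_option maxHeartbeats 1000000

noncomputable section

/-- The dual of `ℝ^{2n+1}`. -/
abbrev DualW (n : ℕ) := Module.Dual ℝ (Fin (2 * n + 1) → ℝ)

/-- Index of the coordinate `x_j` in `ℝ^{2n+1}`. -/
def xIdx (n : ℕ) (j : Fin n) : Fin (2 * n + 1) := ⟨j.1, by have := j.2; omega⟩

/-- Index of the coordinate `y_j` in `ℝ^{2n+1}`. -/
def yIdx (n : ℕ) (j : Fin n) : Fin (2 * n + 1) := ⟨n + j.1, by have := j.2; omega⟩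

/-- Index of the coordinate `t` in `ℝ^{2n+1}`. -/
def tIdx (n : ℕ) : Fin (2 * n + 1) := ⟨2 * n, by omega⟩

/-- The covector `dx_j` in the exterior algebra of the dual of `ℝ^{2n+1}`. -/
def dX (n : ℕ) (j : Fin n) : ExteriorAlgebra ℝ (DualW n) :=
  ExteriorAlgebra.ι ℝ (LinearMap.proj (xIdx n j))

/-- The covector `dy_j` in the exterior algebra of the dual of `ℝ^{2n+1}`. -/
def dY (n : ℕ) (j : Fin n) : ExteriorAlgebra ℝ (DualW n) :=
  ExteriorAlgebra.ι ℝ (LinearMap.proj (yIdx n j))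

/-- The covector `dt` in the exterior algebra of the dual of `ℝ^{2n+1}`. -/
def dT (n : ℕ) : ExteriorAlgebra ℝ (DualW n) :=
  ExteriorAlgebra.ι ℝ (LinearMap.proj (tIdx n))

/-- `dx_I = dx_{i_1} ∧ … ∧ dx_{i_k}` for `I = (i_1 < … < i_k)`; similarly `dy_J`. -/
def wedgeOf (n : ℕ) (g : Fin n → ExteriorAlgebra ℝ (DualW n)) (I : Finset (Fin n)) :
    ExteriorAlgebra ℝ (DualW n) :=
  ((I.sort (· ≤ ·)).map g).prod

/-- The span of the products `dx_I ∧ dy_J` with `|I| + |J| = k`, i.e. the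
`k`-covectors containing no components with `dt`. -/
def horiz (n k : ℕ) : Submodule ℝ (ExteriorAlgebra ℝ (DualW n)) :=
  Submodule.span ℝ {z | ∃ I J : Finset (Fin n),
    I.card + J.card = k ∧ z = wedgeOf n (dX n) I * wedgeOf n (dY n) J}

/-- The form `ω' = 4∑_{j=1}^n dx_j ∧ dy_j`. -/
def omega' (n : ℕ) : ExteriorAlgebra ℝ (DualW n) :=
  (4 : ℝ) • ∑ j : Fin n, dX n j * dY n j

/-!
Order the coordinate covectors as `dx₁, dy₁, dx₂, dy₂, …` and let `blade (I, J)` be the product,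
in this order, of the `dx_j` with `j ∈ I` and the `dy_j` with `j ∈ J`. It equals `± dx_I ∧ dy_J`,
and since each 2-form `dx_j ∧ dy_j` is central,
`(∑ⱼ dx_j ∧ dy_j) ∧ blade (I, J) = ∑_{j ∉ I ∪ J} blade (I ∪ {j}, J ∪ {j})` holds without signs.
As blades of a fixed degree are linearly independent, the theorem becomes a statement about the
operator `L f (I, J) = ∑_{j ∈ I ∩ J} f (I \ {j}, J \ {j})` on functions of pairs of subsets of an
`n`-element set: `L` maps the functions supported in weight `|I| + |J| = n - 1` bijectively onto
those supported in weight `n + 1`. Its adjoint `D` for the dot product satisfies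
`D L - L D = n - weight`, so `‖L f‖² = ‖D f‖² + (n - k) ‖f‖²` for `f` of weight `k`, and `L` is
injective below the middle weight. The two weight spaces have equal dimension through
`(I, J) ↦ (Iᶜ, Jᶜ)`, so `L` is onto as well.
-/

namespace ExteriorAlgebra

variable {R M I : Type*} [CommRing R] [AddCommGroup M] [Module R M]

variable (R) in
def listProd (v : I → M) (l : List I) : ExteriorAlgebra R M := (l.map fun i => ι R (v i)).prod

variable (v : I → M)

@[simp] lemma listProd_nil : listProd R v [] = 1 := rfl

@[simp] lemma listProd_cons (i : I) (l : List I) :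
    listProd R v (i :: l) = ι R (v i) * listProd R v l := by
  simp [listProd]

@[simp] lemma listProd_append (l₁ l₂ : List I) :
    listProd R v (l₁ ++ l₂) = listProd R v l₁ * listProd R v l₂ := by
  simp [listProd]

lemma ι_mul_ι_swap (x y : M) : ι R x * ι R y = -(ι R y * ι R x) :=
  eq_neg_of_add_eq_zero_left (ι_add_mul_swap x y)

lemma ι_mul_ι_commute_ι (x y z : M) : Commute (ι R x * ι R y) (ι R z) := by
  simp only [Commute, SemiconjBy, mul_assoc, ι_mul_ι_swap y z, mul_neg]
  rw [← mul_assoc, ι_mul_ι_swap x z, neg_mul, neg_neg, mul_assoc]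

lemma ι_mul_ι_commute_listProd (x y : M) (l : List I) :
    Commute (ι R x * ι R y) (listProd R v l) :=
  Commute.list_prod_right _ _ fun _ hz => by
    obtain ⟨i, -, rfl⟩ := List.mem_map.mp hz
    exact ι_mul_ι_commute_ι x y (v i)

lemma listProd_perm {l l' : List I} (h : l.Perm l') :
    listProd R v l' = listProd R v l ∨ listProd R v l' = -listProd R v l := by
  induction h with
  | nil => exact Or.inl rfl
  | cons i _ ih => rcases ih with e | e <;> simp [e]
  | swap i j l =>
    right
    simp only [listProd_cons, ← mul_assoc, ι_mul_ι_swap (v j) (v i), neg_mul, neg_neg]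
  | trans _ _ ih₁ ih₂ => rcases ih₁ with e₁ | e₁ <;> rcases ih₂ with e₂ | e₂ <;> simp [e₁, e₂]

lemma listProd_sort [LinearOrder I] {k : ℕ} (s : Set.powersetCard I k) :
    listProd R v (s.1.sort (· ≤ ·)) = ιMulti_family R k v s := by
  rw [ιMulti_family, ιMulti_apply, listProd]
  refine congrArg List.prod (List.ext_getElem (by simp) fun i _ hi => ?_)
  simp only [List.getElem_map, List.getElem_ofFn, Function.comp_apply,
    Set.powersetCard.ofFinEmbEquiv_symm_apply]
  rw [Finset.orderEmbOfFin_apply s.1 s.2 ⟨i, by simpa using hi⟩]; rfl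

lemma ι_mul_listProd_of_mem {i : I} {l : List I} (h : i ∈ l) :
    ι R (v i) * listProd R v l = 0 := by
  obtain ⟨k, hk, rfl⟩ := List.getElem_of_mem h
  rw [listProd, ← List.ofFn_getElem_eq_map]
  exact ι_mul_prod_list (fun j : Fin l.length => v l[j]) ⟨k, hk⟩

lemma ι_mul_ι_mul_listProd_of_mem {i i' : I} {l : List I} (h : i ∈ l ∨ i' ∈ l) :
    ι R (v i) * ι R (v i') * listProd R v l = 0 := by
  rcases h with h | h
  · rw [ι_mul_ι_swap, neg_mul, mul_assoc, ι_mul_listProd_of_mem v h, mul_zero, neg_zero]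
  · rw [mul_assoc, ι_mul_listProd_of_mem v h, mul_zero]

section Field

variable {K E : Type*} [Field K] [AddCommGroup E] [Module K E] [LinearOrder I] {v : I → E}

lemma linearIndependent_ιMulti_family (hv : LinearIndependent K v) (k : ℕ) :
    LinearIndependent K (ιMulti_family K k v) := by
  rw [exteriorPower.ιMulti_family_eq_coe_comp]
  exact (exteriorPower.ιMulti_family_linearIndependent_field k hv).map' _
    (Submodule.ker_subtype _)

lemma linearIndependent_listProd (hv : LinearIndependent K v) {X : Type*} {k : ℕ}
    {L : X → List I} (hnd : ∀ x, (L x).Nodup) (hlen : ∀ x, (L x).length = k)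
    (hinj : Function.Injective fun x => (L x).toFinset) :
    LinearIndependent K fun x => listProd K v (L x) := by
  let s : X → Set.powersetCard I k := fun x =>
    ⟨(L x).toFinset, by simp [Set.powersetCard, List.toFinset_card_of_nodup (hnd x), hlen x]⟩
  have hs : Function.Injective s := fun x y h => hinj (congrArg Subtype.val h)
  have hsign : ∀ x, ∃ u : Kˣ, listProd K v (L x) = u • ιMulti_family K k v (s x) := fun x => by
    rw [← listProd_sort (R := K)]
    have hperm : ((s x).1.sort (· ≤ ·)).Perm (L x) :=
      List.perm_of_nodup_nodup_toFinset_eq (Finset.sort_nodup _ _) (hnd x)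
        (Finset.sort_toFinset _ _)
    rcases listProd_perm (R := K) v hperm with h | h
    · exact ⟨1, by rw [h, one_smul]⟩
    · exact ⟨-1, by rw [h, Units.neg_smul, one_smul]⟩
  choose u hu using hsign
  convert ((linearIndependent_ιMulti_family hv k).comp s hs).units_smul u using 1
  funext x
  simp [hu]

end Field

end ExteriorAlgebra

open Finset

namespace FinsetPair

variable {α : Type*}

def weight (p : Finset α × Finset α) : ℕ := #p.1 + #p.2

variable (𝕜 : Type*) [Field 𝕜]

def weightSpace (k : ℕ) : Submodule 𝕜 (Finset α × Finset α → 𝕜) :=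
  Submodule.pi {p | weight p ≠ k} fun _ => ⊥

variable {𝕜} in
lemma mem_weightSpace {k : ℕ} {f : Finset α × Finset α → 𝕜} :
    f ∈ weightSpace 𝕜 k ↔ ∀ p, weight p ≠ k → f p = 0 := by
  simp [weightSpace, Submodule.mem_pi]

variable [DecidableEq α]

def lefschetz : (Finset α × Finset α → 𝕜) →ₗ[𝕜] (Finset α × Finset α → 𝕜) where
  toFun f p := ∑ j ∈ p.1 ∩ p.2, f (p.1.erase j, p.2.erase j)
  map_add' f g := by ext; simp [sum_add_distrib]
  map_smul' c f := by ext; simp [mul_sum]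

variable {𝕜}

lemma lefschetz_apply (f : Finset α × Finset α → 𝕜) (p : Finset α × Finset α) :
    lefschetz 𝕜 f p = ∑ j ∈ p.1 ∩ p.2, f (p.1.erase j, p.2.erase j) := rfl

lemma lefschetz_mem_weightSpace {k : ℕ} {f : Finset α × Finset α → 𝕜}
    (hf : f ∈ weightSpace 𝕜 k) : lefschetz 𝕜 f ∈ weightSpace 𝕜 (k + 2) := by
  refine mem_weightSpace.mpr fun p hp => sum_eq_zero fun j hj => ?_
  rw [mem_inter] at hj
  refine mem_weightSpace.mp hf _ fun hw => hp ?_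
  have h₁ := card_erase_add_one hj.1
  have h₂ := card_erase_add_one hj.2
  simp only [weight] at hw ⊢
  omega

variable [Fintype α]

variable (𝕜) in
def lefschetzAdjoint : (Finset α × Finset α → 𝕜) →ₗ[𝕜] (Finset α × Finset α → 𝕜) where
  toFun f p := ∑ j ∈ (p.1 ∪ p.2)ᶜ, f (insert j p.1, insert j p.2)
  map_add' f g := by ext; simp [sum_add_distrib]
  map_smul' c f := by ext; simp [mul_sum]

lemma lefschetzAdjoint_apply (f : Finset α × Finset α → 𝕜) (p : Finset α × Finset α) :
    lefschetzAdjoint 𝕜 f p = ∑ j ∈ (p.1 ∪ p.2)ᶜ, f (insert j p.1, insert j p.2) := rfl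

lemma sum_sum_compl_union_eq {M : Type*} [AddCommMonoid M] (G : Finset α × Finset α → α → M) :
    ∑ p, ∑ j ∈ (p.1 ∪ p.2)ᶜ, G p j
      = ∑ q : Finset α × Finset α, ∑ j ∈ q.1 ∩ q.2, G (q.1.erase j, q.2.erase j) j := by
  rw [sum_sigma', sum_sigma']
  refine sum_nbij' (fun x => ⟨(insert x.2 x.1.1, insert x.2 x.1.2), x.2⟩)
    (fun x => ⟨(x.1.1.erase x.2, x.1.2.erase x.2), x.2⟩) ?_ ?_ ?_ ?_ ?_
  · simp
  · simp
  · rintro ⟨⟨I, J⟩, j⟩ h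
    simp only [mem_sigma, mem_univ, mem_compl, mem_union, not_or, true_and] at h
    simp [erase_insert h.1, erase_insert h.2]
  · rintro ⟨⟨I, J⟩, j⟩ h
    simp only [mem_sigma, mem_univ, mem_inter, true_and] at h
    simp [insert_erase h.1, insert_erase h.2]
  · rintro ⟨⟨I, J⟩, j⟩ h
    simp only [mem_sigma, mem_univ, mem_compl, mem_union, not_or, true_and] at h
    simp [erase_insert h.1, erase_insert h.2]

lemma lefschetz_dotProduct (f g : Finset α × Finset α → 𝕜) :
    lefschetz 𝕜 f ⬝ᵥ g = f ⬝ᵥ lefschetzAdjoint 𝕜 g := by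
  simp only [dotProduct, lefschetz_apply, lefschetzAdjoint_apply, sum_mul, mul_sum]
  rw [sum_sum_compl_union_eq fun p j => f p * g (insert j p.1, insert j p.2)]
  refine sum_congr rfl fun q _ => sum_congr rfl fun j hj => ?_
  rw [mem_inter] at hj
  simp [insert_erase hj.1, insert_erase hj.2]

lemma lefschetzAdjoint_lefschetz_apply (f : Finset α × Finset α → 𝕜) (p : Finset α × Finset α) :
    lefschetzAdjoint 𝕜 (lefschetz 𝕜 f) p + #(p.1 ∩ p.2) * f p
      = lefschetz 𝕜 (lefschetzAdjoint 𝕜 f) p + #(p.1 ∪ p.2)ᶜ * f p := by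
  obtain ⟨I, J⟩ := p
  have hDL : lefschetzAdjoint 𝕜 (lefschetz 𝕜 f) (I, J) = #(I ∪ J)ᶜ * f (I, J)
      + ∑ j ∈ (I ∪ J)ᶜ, ∑ k ∈ I ∩ J, f (insert j (I.erase k), insert j (J.erase k)) := by
    rw [lefschetzAdjoint_apply, ← nsmul_eq_mul, ← sum_const, ← sum_add_distrib]
    refine sum_congr rfl fun j hj => ?_
    simp only [mem_compl, mem_union, not_or] at hj
    have hjIJ : j ∉ I ∩ J := fun h => hj.1 (mem_inter.mp h).1
    rw [lefschetz_apply, ← insert_inter_distrib, sum_insert hjIJ, erase_insert hj.1,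
      erase_insert hj.2]
    congr 1
    refine sum_congr rfl fun k hk => ?_
    have hjk : j ≠ k := fun h => hjIJ (h ▸ hk)
    rw [erase_insert_of_ne hjk, erase_insert_of_ne hjk]
  have hLD : lefschetz 𝕜 (lefschetzAdjoint 𝕜 f) (I, J) = #(I ∩ J) * f (I, J)
      + ∑ k ∈ I ∩ J, ∑ j ∈ (I ∪ J)ᶜ, f (insert j (I.erase k), insert j (J.erase k)) := by
    rw [lefschetz_apply, ← nsmul_eq_mul, ← sum_const, ← sum_add_distrib]
    refine sum_congr rfl fun k hk => ?_
    have hkI := (mem_inter.mp hk).1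
    have hkJ := (mem_inter.mp hk).2
    have hk' : k ∉ (I ∪ J)ᶜ := by simp [hkI]
    rw [lefschetzAdjoint_apply, ← erase_union_distrib, compl_erase, sum_insert hk',
      insert_erase hkI, insert_erase hkJ]
  rw [hDL, hLD, sum_comm]
  ring

lemma card_compl_union_add_weight (p : Finset α × Finset α) :
    #(p.1 ∪ p.2)ᶜ + weight p = Fintype.card α + #(p.1 ∩ p.2) := by
  have := card_compl_add_card (p.1 ∪ p.2)
  have := card_union_add_card_inter p.1 p.2
  rw [weight]
  omega

lemma lefschetzAdjoint_lefschetz_of_mem {k : ℕ} {f : Finset α × Finset α → 𝕜}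
    (hf : f ∈ weightSpace 𝕜 k) :
    lefschetzAdjoint 𝕜 (lefschetz 𝕜 f)
      = lefschetz 𝕜 (lefschetzAdjoint 𝕜 f) + ((Fintype.card α : 𝕜) - k) • f := by
  ext p
  have hcomm := lefschetzAdjoint_lefschetz_apply f p
  rw [Pi.add_apply, Pi.smul_apply, smul_eq_mul]
  by_cases hp : weight p = k
  · have hcard : (#(p.1 ∪ p.2)ᶜ : 𝕜) + k = Fintype.card α + #(p.1 ∩ p.2) := by
      rw [← hp]; exact_mod_cast congrArg (Nat.cast : ℕ → 𝕜) (card_compl_union_add_weight p)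
    linear_combination hcomm + f p * hcard
  · rw [mem_weightSpace.mp hf p hp] at hcomm ⊢
    simpa using hcomm

lemma finrank_weightSpace_eq {k l : ℕ} (hkl : k + l = 2 * Fintype.card α) :
    Module.finrank 𝕜 (weightSpace (α := α) 𝕜 k) = Module.finrank 𝕜 (weightSpace (α := α) 𝕜 l) := by
  let c : Equiv.Perm (Finset α) := Function.Involutive.toPerm _ compl_involutive
  let σ := c.prodCongr c
  have hσσ : ∀ p, σ (σ p) = p := fun p => by
    simp [σ, c, Prod.map_map]
  have hσ_symm : ∀ p, σ.symm p = σ p := fun p => σ.symm_apply_eq.mpr (hσσ p).symm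
  have hweight : ∀ p, weight (σ p) + weight p = 2 * Fintype.card α := fun p => by
    have := card_compl_add_card p.1
    have := card_compl_add_card p.2
    simp only [weight, σ, c, Equiv.prodCongr_apply, Prod.map, Function.Involutive.coe_toPerm]
    omega
  refine LinearEquiv.finrank_eq ((LinearEquiv.funCongrLeft 𝕜 𝕜 σ).ofSubmodules _ _ ?_)
  ext g
  simp only [Submodule.map_equiv_eq_comap_symm, Submodule.mem_comap, mem_weightSpace,
    LinearEquiv.coe_coe, LinearEquiv.funCongrLeft_symm, LinearEquiv.funCongrLeft_apply,
    LinearMap.funLeft_apply, hσ_symm]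
  constructor
  · intro h q hq
    simpa [hσσ] using h (σ q) (by have := hweight q; omega)
  · intro h p hp
    exact h _ (by have := hweight p; omega)

variable [LinearOrder 𝕜] [IsStrictOrderedRing 𝕜]

lemma eq_zero_of_lefschetz_eq_zero {k : ℕ} (hk : k < Fintype.card α)
    {f : Finset α × Finset α → 𝕜} (hf : f ∈ weightSpace 𝕜 k) (h : lefschetz 𝕜 f = 0) :
    f = 0 := by
  have hnorm : lefschetz 𝕜 f ⬝ᵥ lefschetz 𝕜 f
      = lefschetzAdjoint 𝕜 f ⬝ᵥ lefschetzAdjoint 𝕜 f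
        + ((Fintype.card α : 𝕜) - k) * (f ⬝ᵥ f) := by
    rw [lefschetz_dotProduct, lefschetzAdjoint_lefschetz_of_mem hf, dotProduct_add,
      dotProduct_smul, dotProduct_comm, lefschetz_dotProduct, smul_eq_mul]
  have hpos : (0 : 𝕜) < Fintype.card α - k := sub_pos.mpr (by exact_mod_cast hk)
  have hD : 0 ≤ lefschetzAdjoint 𝕜 f ⬝ᵥ lefschetzAdjoint 𝕜 f :=
    Fintype.sum_nonneg fun _ => mul_self_nonneg _
  have hf0 : 0 ≤ f ⬝ᵥ f := Fintype.sum_nonneg fun _ => mul_self_nonneg _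
  rw [h, zero_dotProduct] at hnorm
  exact dotProduct_self_eq_zero.mp (by nlinarith)

lemma exists_lefschetz_eq {k : ℕ} (hk : k + 1 = Fintype.card α) {g : Finset α × Finset α → 𝕜}
    (hg : g ∈ weightSpace 𝕜 (k + 2)) : ∃ f ∈ weightSpace 𝕜 k, lefschetz 𝕜 f = g := by
  let L : weightSpace 𝕜 k →ₗ[𝕜] weightSpace 𝕜 (k + 2) :=
    (lefschetz 𝕜).restrict fun _ => lefschetz_mem_weightSpace (α := α)
  have hL : Function.Injective L := by
    refine (injective_iff_map_eq_zero L).mpr fun f hf => Subtype.ext ?_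
    exact eq_zero_of_lefschetz_eq_zero (by omega) f.2 (congrArg Subtype.val hf)
  obtain ⟨f, hf⟩ := (LinearMap.injective_iff_surjective_of_finrank_eq_finrank
    (finrank_weightSpace_eq (by omega)) |>.mp hL) ⟨g, hg⟩
  exact ⟨f, f.2, congrArg Subtype.val hf⟩

end FinsetPair

namespace HorizontalForms

open ExteriorAlgebra FinsetPair

variable {n : ℕ}

def coord (n : ℕ) (i : Fin (2 * n + 1)) : DualW n := LinearMap.proj i

lemma linearIndependent_coord : LinearIndependent ℝ (coord n) :=
  LinearIndependent.of_pairwise_dual_eq_zero_one _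
    (fun i => Module.Dual.eval ℝ _ (Pi.single i 1))
    (fun i j hij => by simp [coord, Ne.symm hij])
    (fun i => by simp [coord])

lemma xIdx_injective : Function.Injective (xIdx n) := fun _ _ h => by
  simpa [xIdx, Fin.ext_iff] using h

lemma yIdx_injective : Function.Injective (yIdx n) := fun _ _ h => by
  simpa [yIdx, Fin.ext_iff] using h

lemma xIdx_ne_yIdx (j j' : Fin n) : xIdx n j ≠ yIdx n j' := fun h => by
  have := congrArg Fin.val h
  simp only [xIdx, yIdx] at this
  omega

def block (p : Finset (Fin n) × Finset (Fin n)) (j : Fin n) : List (Fin (2 * n + 1)) :=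
  (if j ∈ p.1 then [xIdx n j] else []) ++ (if j ∈ p.2 then [yIdx n j] else [])

def blockList (p : Finset (Fin n) × Finset (Fin n)) : List (Fin (2 * n + 1)) :=
  (List.finRange n).flatMap (block p)

def wedgeList (p : Finset (Fin n) × Finset (Fin n)) : List (Fin (2 * n + 1)) :=
  (p.1.sort (· ≤ ·)).map (xIdx n) ++ (p.2.sort (· ≤ ·)).map (yIdx n)

def blade (p : Finset (Fin n) × Finset (Fin n)) : ExteriorAlgebra ℝ (DualW n) :=
  listProd ℝ (coord n) (blockList p)

lemma mem_block {p : Finset (Fin n) × Finset (Fin n)} {j : Fin n} {a : Fin (2 * n + 1)} :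
    a ∈ block p j ↔ (j ∈ p.1 ∧ a = xIdx n j) ∨ (j ∈ p.2 ∧ a = yIdx n j) := by
  unfold block; split_ifs <;> simp [*]

lemma mem_blockList {p : Finset (Fin n) × Finset (Fin n)} {a : Fin (2 * n + 1)} :
    a ∈ blockList p ↔ (∃ j ∈ p.1, a = xIdx n j) ∨ (∃ j ∈ p.2, a = yIdx n j) := by
  simp only [blockList, List.mem_flatMap, List.mem_finRange, true_and, mem_block]
  aesop

lemma mem_wedgeList {p : Finset (Fin n) × Finset (Fin n)} {a : Fin (2 * n + 1)} :
    a ∈ wedgeList p ↔ (∃ j ∈ p.1, a = xIdx n j) ∨ (∃ j ∈ p.2, a = yIdx n j) := by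
  simp [wedgeList, eq_comm]

lemma nodup_blockList (p : Finset (Fin n) × Finset (Fin n)) : (blockList p).Nodup := by
  refine List.nodup_flatMap.mpr ⟨fun j _ => ?_, (List.nodup_finRange n).imp fun hjj' => ?_⟩
  · unfold block; split_ifs <;> simp [xIdx_ne_yIdx]
  · refine List.disjoint_left.mpr fun _ ha ha' => ?_
    rcases mem_block.mp ha with ⟨-, rfl⟩ | ⟨-, rfl⟩ <;>
      rcases mem_block.mp ha' with ⟨-, h⟩ | ⟨-, h⟩
    · exact hjj' (xIdx_injective h)
    · exact xIdx_ne_yIdx _ _ h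
    · exact xIdx_ne_yIdx _ _ h.symm
    · exact hjj' (yIdx_injective h)

lemma nodup_wedgeList (p : Finset (Fin n) × Finset (Fin n)) : (wedgeList p).Nodup :=
  ((sort_nodup _ _).map xIdx_injective).append ((sort_nodup _ _).map yIdx_injective)
    (List.disjoint_left.mpr fun _ ha ha' => by
      obtain ⟨j, -, rfl⟩ := List.mem_map.mp ha
      obtain ⟨j', -, h⟩ := List.mem_map.mp ha'
      exact xIdx_ne_yIdx _ _ h.symm)

lemma blockList_perm_wedgeList (p : Finset (Fin n) × Finset (Fin n)) :
    (blockList p).Perm (wedgeList p) :=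
  List.perm_of_nodup_nodup_toFinset_eq (nodup_blockList p) (nodup_wedgeList p) <| by
    ext a; simp only [List.mem_toFinset, mem_blockList, mem_wedgeList]

lemma length_blockList (p : Finset (Fin n) × Finset (Fin n)) :
    (blockList p).length = weight p := by
  simp [(blockList_perm_wedgeList p).length_eq, wedgeList, weight]

lemma toFinset_blockList_injective :
    Function.Injective fun p : Finset (Fin n) × Finset (Fin n) => (blockList p).toFinset := by
  intro p q h
  have hmem : ∀ a, a ∈ blockList p ↔ a ∈ blockList q := fun a => by
    simpa using congrArg (a ∈ ·) h
  refine Prod.ext (Finset.ext fun j => ?_) (Finset.ext fun j => ?_)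
  · simpa [mem_blockList, xIdx_injective.eq_iff, xIdx_ne_yIdx] using hmem (xIdx n j)
  · simpa [mem_blockList, yIdx_injective.eq_iff, (xIdx_ne_yIdx _ _).symm] using hmem (yIdx n j)

lemma wedgeOf_mul_wedgeOf (p : Finset (Fin n) × Finset (Fin n)) :
    wedgeOf n (dX n) p.1 * wedgeOf n (dY n) p.2 = blade p ∨
      wedgeOf n (dX n) p.1 * wedgeOf n (dY n) p.2 = -blade p := by
  have h : wedgeOf n (dX n) p.1 * wedgeOf n (dY n) p.2 = listProd ℝ (coord n) (wedgeList p) := by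
    simp only [wedgeList, wedgeOf, listProd, List.map_append, List.prod_append, List.map_map]
    rfl
  rw [h]
  exact listProd_perm (coord n) (blockList_perm_wedgeList p)

lemma exists_blockList_eq_append (p : Finset (Fin n) × Finset (Fin n)) (j : Fin n) :
    ∃ A B, ∀ q : Finset (Fin n) × Finset (Fin n), (∀ j' ≠ j, block q j' = block p j') →
      blockList q = A ++ block q j ++ B := by
  obtain ⟨l₁, l₂, hsplit⟩ := List.append_of_mem (List.mem_finRange j)
  have hnd := List.nodup_finRange n
  rw [hsplit, List.nodup_append, List.nodup_cons] at hnd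
  refine ⟨l₁.flatMap (block p), l₂.flatMap (block p), fun q hq => ?_⟩
  rw [blockList, hsplit, List.flatMap_append, List.flatMap_cons, List.append_assoc]
  congr 1
  · exact List.flatMap_congr fun j' hj' => hq j' fun h => by
      exact hnd.2.2 j' hj' j List.mem_cons_self h
  · congr 1
    exact List.flatMap_congr fun j' hj' => hq j' fun h => hnd.2.1.1 (h ▸ hj')

lemma dX_mul_dY_mul_blade (p : Finset (Fin n) × Finset (Fin n)) (j : Fin n) :
    dX n j * dY n j * blade p
      = if j ∈ (p.1 ∪ p.2)ᶜ then blade (insert j p.1, insert j p.2) else 0 := by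
  obtain ⟨A, B, hAB⟩ := exists_blockList_eq_append p j
  have hpair : dX n j * dY n j = ι ℝ (coord n (xIdx n j)) * ι ℝ (coord n (yIdx n j)) := rfl
  rw [hpair, blade, hAB p fun _ _ => rfl, listProd_append, listProd_append, ← mul_assoc,
    ← mul_assoc, (ι_mul_ι_commute_listProd _ _ _ A).eq, mul_assoc _ _ (listProd ℝ _ (block p j))]
  split_ifs with hj
  · simp only [mem_compl, mem_union, not_or] at hj
    have hp' : ∀ j' ≠ j, block (insert j p.1, insert j p.2) j' = block p j' := fun j' h => by
      simp [block, mem_insert, h]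
    simp [blade, hAB _ hp', block, hj, mul_assoc]
  · simp only [mem_compl, mem_union, not_or, not_and_or, not_not] at hj
    rw [ι_mul_ι_mul_listProd_of_mem _ (hj.imp (fun h => mem_block.mpr (Or.inl ⟨h, rfl⟩))
      (fun h => mem_block.mpr (Or.inr ⟨h, rfl⟩))), mul_zero, zero_mul]

lemma linearIndependent_blade (k : ℕ) :
    LinearIndependent ℝ fun p : {p : Finset (Fin n) × Finset (Fin n) // weight p = k} =>
      blade p.1 :=
  linearIndependent_listProd linearIndependent_coord (fun p => nodup_blockList p.1)
    (fun p => (length_blockList p.1).trans p.2)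
    (toFinset_blockList_injective.comp Subtype.val_injective)

lemma blade_mem_horiz (p : Finset (Fin n) × Finset (Fin n)) : blade p ∈ horiz n (weight p) := by
  have hwedge : wedgeOf n (dX n) p.1 * wedgeOf n (dY n) p.2 ∈ horiz n (weight p) :=
    Submodule.subset_span ⟨p.1, p.2, rfl, rfl⟩
  rcases wedgeOf_mul_wedgeOf p with h | h
  · rwa [h] at hwedge
  · rwa [h, neg_mem_iff] at hwedge

def bladeCombination (n : ℕ) :
    (Finset (Fin n) × Finset (Fin n) → ℝ) →ₗ[ℝ] ExteriorAlgebra ℝ (DualW n) :=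
  Fintype.linearCombination ℝ blade

lemma bladeCombination_apply (f : Finset (Fin n) × Finset (Fin n) → ℝ) :
    bladeCombination n f = ∑ p, f p • blade p :=
  Fintype.linearCombination_apply ℝ _ f

lemma eq_zero_of_bladeCombination_eq_zero {k : ℕ} {f : Finset (Fin n) × Finset (Fin n) → ℝ}
    (hf : f ∈ weightSpace ℝ k) (h : bladeCombination n f = 0) : f = 0 := by
  have hsum : ∑ p : {p : Finset (Fin n) × Finset (Fin n) // weight p = k}, f p • blade p.1 = 0 := by
    rw [← h, bladeCombination_apply, ← sum_filter_of_ne (p := fun p => weight p = k)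
      fun p _ hp => by_contra fun hw => hp (by rw [mem_weightSpace.mp hf p hw, zero_smul])]
    exact (sum_subtype _ (by simp) fun p => f p • blade p).symm
  funext p
  by_cases hw : weight p = k
  · exact Fintype.linearIndependent_iff.mp (linearIndependent_blade k) _ hsum ⟨p, hw⟩
  · exact mem_weightSpace.mp hf p hw

lemma horiz_eq_map (k : ℕ) : horiz n k = (weightSpace ℝ k).map (bladeCombination n) := by
  apply le_antisymm
  · refine Submodule.span_le.mpr ?_
    rintro _ ⟨I, J, hk, rfl⟩
    have hsingle : Pi.single (I, J) 1 ∈ weightSpace ℝ k := mem_weightSpace.mpr fun p hp =>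
      Pi.single_eq_of_ne (by rintro rfl; exact hp hk) _
    have hblade : blade (I, J) ∈ (weightSpace ℝ k).map (bladeCombination n) :=
      ⟨_, hsingle, by simp [bladeCombination]⟩
    rcases wedgeOf_mul_wedgeOf (I, J) with h | h
    · rw [h]; exact hblade
    · rw [h]; exact neg_mem hblade
  · rintro _ ⟨f, hf, rfl⟩
    rw [bladeCombination_apply]
    refine Submodule.sum_mem _ fun p _ => ?_
    by_cases hw : weight p = k
    · exact Submodule.smul_mem _ _ (hw ▸ blade_mem_horiz p)
    · rw [mem_weightSpace.mp hf p hw, zero_smul]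
      exact Submodule.zero_mem _

lemma sum_dX_mul_dY_mul_bladeCombination (f : Finset (Fin n) × Finset (Fin n) → ℝ) :
    (∑ j, dX n j * dY n j) * bladeCombination n f = bladeCombination n (lefschetz ℝ f) := by
  calc (∑ j, dX n j * dY n j) * bladeCombination n f
      = ∑ p, ∑ j, f p • (dX n j * dY n j * blade p) := by
        simp only [bladeCombination_apply, mul_sum, mul_smul_comm, sum_mul, smul_sum]
    _ = ∑ p, ∑ j ∈ (p.1 ∪ p.2)ᶜ, f p • blade (insert j p.1, insert j p.2) := by
        simp only [dX_mul_dY_mul_blade, smul_ite, smul_zero, sum_ite_mem, univ_inter]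
    _ = ∑ q, ∑ j ∈ q.1 ∩ q.2, f (q.1.erase j, q.2.erase j) • blade q := by
        rw [sum_sum_compl_union_eq fun p j => f p • blade (insert j p.1, insert j p.2)]
        refine sum_congr rfl fun q _ => sum_congr rfl fun j hj => ?_
        rw [mem_inter] at hj
        simp only [insert_erase hj.1, insert_erase hj.2]
    _ = bladeCombination n (lefschetz ℝ f) := by
        simp only [bladeCombination_apply, lefschetz_apply, sum_smul]

lemma omega'_mul_bladeCombination (f : Finset (Fin n) × Finset (Fin n) → ℝ) :
    omega' n * bladeCombination n f = bladeCombination n (lefschetz ℝ ((4 : ℝ) • f)) := by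
  rw [omega', smul_mul_assoc, sum_dX_mul_dY_mul_bladeCombination, map_smul, map_smul]

lemma omega'_mul_injOn (hn : 1 ≤ n) : Set.InjOn (omega' n * ·) (horiz n (n - 1)) := by
  intro δ hδ δ' hδ' h
  rw [SetLike.mem_coe, horiz_eq_map] at hδ hδ'
  obtain ⟨f, hf, rfl⟩ := hδ
  obtain ⟨f', hf', rfl⟩ := hδ'
  have hg : (4 : ℝ) • (f - f') ∈ weightSpace ℝ (n - 1) := Submodule.smul_mem _ _ (sub_mem hf hf')
  have hLg : bladeCombination n (lefschetz ℝ ((4 : ℝ) • (f - f'))) = 0 := by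
    rw [← omega'_mul_bladeCombination, map_sub, mul_sub, sub_eq_zero]
    exact h
  have h4 := eq_zero_of_lefschetz_eq_zero (by simp; omega) hg
    (eq_zero_of_bladeCombination_eq_zero (lefschetz_mem_weightSpace hg) hLg)
  rw [smul_eq_zero, sub_eq_zero] at h4
  rw [h4.resolve_left four_ne_zero]

lemma exists_omega'_mul_eq (hn : 1 ≤ n) {η : ExteriorAlgebra ℝ (DualW n)}
    (hη : η ∈ horiz n (n + 1)) : ∃ δ ∈ horiz n (n - 1), omega' n * δ = η := by
  rw [horiz_eq_map] at hη
  obtain ⟨g, hg, rfl⟩ := hη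
  obtain ⟨f, hf, rfl⟩ := exists_lefschetz_eq (by simpa using Nat.sub_add_cancel hn)
    (show g ∈ weightSpace ℝ (n - 1 + 2) by rwa [show n - 1 + 2 = n + 1 by omega])
  refine ⟨bladeCombination n ((4 : ℝ)⁻¹ • f),
    horiz_eq_map _ ▸ ⟨_, Submodule.smul_mem _ _ hf, rfl⟩, ?_⟩
  rw [omega'_mul_bladeCombination, smul_smul, mul_inv_cancel₀ four_ne_zero, one_smul]

end HorizontalForms

open HorizontalForms in
theorem statement9 (n : ℕ) (hn : 1 ≤ n)
    (η : ExteriorAlgebra ℝ (DualW n))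
    -- `η` lies in the span of the `dx_I ∧ dy_J` with `|I| + |J| = n+1`
    (hη : η ∈ horiz n (n + 1)) :
    -- there is a unique `δ` in the span of the `dx_{I'} ∧ dy_{J'}` with
    -- `|I'| + |J'| = n-1` such that `η = ω' ∧ δ`
    ∃! δ : ExteriorAlgebra ℝ (DualW n),
      δ ∈ horiz n (n - 1) ∧ η = omega' n * δ := by
  obtain ⟨δ, hδ, rfl⟩ := exists_omega'_mul_eq hn hη
  exact ⟨δ, ⟨hδ, rfl⟩, fun δ' ⟨hδ', h⟩ => omega'_mul_injOn hn hδ' hδ h.symm⟩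
end
end

section
/- Let U ⊂ ℝ^m be open, f = (f^x, f^y, f^t) : U → ℝ^{2n+1} continuous and bounded on B(x_o,2r) ⊂ U, and let f_ε = f * φ_ε. Then for every p ∈ B(x_o, r), every 0 < ε < r, and every v ∈ ℝ^m, the mollified contact pullback admits the representation (f_ε^*α)(p)(v) = ε^{−m−1} ∫_{B(0,ε)} ∫_{B(0,ε)} φ( f(p−z), f(p−w) ) · φ_ε(w) · (Dφ(z/ε)·v) dw dz, where (f_ε^*α)(p)(v) := Df_ε^t(p)v + 2∑_{j=1}^n ( f_ε^{x_j}(p) Df_ε^{y_j}(p)v − f_ε^{y_j}(p) Df_ε^{x_j}(p)v ) and φ(p,q) = t − t' + 2∑_{j=1}^n (x'_j y_j − x_j y'_j) for p = (x,y,t), q = (x',y',t'). -/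
/-!
Statement 13: if `f = (f^x, f^y, f^t) : U → ℝ^{2n+1}` is continuous and bounded
on `B(x_o, 2r) ⊆ U` and `f_ε = f * φ_ε`, then for every `p ∈ B(x_o, r)`,
`0 < ε < r` and `v ∈ ℝ^m`,
`(f_ε^*α)(p)(v) = ε^{-m-1} ∫_{B(0,ε)} ∫_{B(0,ε)} φ(f(p-z), f(p-w)) φ_ε(w) (Dφ(z/ε)·v) dw dz`,
where `(f_ε^*α)(p)(v) = Df_ε^t(p)v + 2∑_j (f_ε^{x_j}(p) Df_ε^{y_j}(p)v - f_ε^{y_j}(p) Df_ε^{x_j}(p)v)`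
and `φ(p,q) = t - t' + 2∑_j (x'_j y_j - x_j y'_j)`.
-/

noncomputable section

open MeasureTheory

/-- `φ(p,q) = t - t' + 2∑_j (x'_j y_j - x_j y'_j)` for `p = (x,y,t)`, `q = (x',y',t')`. -/
def phiH (n : ℕ) (p q : EuclideanSpace ℝ (Fin (2 * n + 1))) : ℝ :=
  (p (tIdx n) - q (tIdx n)) +
    2 * ∑ j : Fin n, (q (xIdx n j) * p (yIdx n j) - p (xIdx n j) * q (yIdx n j))


open scoped Convolution

namespace Statement13Aux

lemma smul_mem_aux {m : ℕ} {ε : ℝ} (hε : 0 < ε) {z : EuclideanSpace ℝ (Fin m)}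
    (h : ε⁻¹ • z ∈ Metric.closedBall (0 : EuclideanSpace ℝ (Fin m)) 1) :
    z ∈ Metric.closedBall (0 : EuclideanSpace ℝ (Fin m)) ε := by
  simp only [Metric.mem_closedBall, dist_zero_right] at h ⊢
  rw [norm_smul, Real.norm_eq_abs, abs_of_pos (inv_pos.2 hε)] at h
  have h2 : ‖z‖ = ε * (ε⁻¹ * ‖z‖) := by field_simp
  rw [h2]
  calc ε * (ε⁻¹ * ‖z‖) ≤ ε * 1 := mul_le_mul_of_nonneg_left h hε.le
    _ = ε := mul_one ε

lemma supp_scaled {m : ℕ} {φ : EuclideanSpace ℝ (Fin m) → ℝ}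
    (hφ_supp : Function.support φ ⊆ Metric.closedBall 0 1) {ε : ℝ} (hε : 0 < ε)
    {z : EuclideanSpace ℝ (Fin m)} (hz : z ∉ Metric.closedBall (0 : EuclideanSpace ℝ (Fin m)) ε) :
    φ (ε⁻¹ • z) = 0 :=
  Function.notMem_support.mp fun h => hz (smul_mem_aux hε (hφ_supp h))

lemma fderiv_scaled_zero {m : ℕ} {φ : EuclideanSpace ℝ (Fin m) → ℝ}
    (hφ_supp : Function.support φ ⊆ Metric.closedBall 0 1) {ε : ℝ} (hε : 0 < ε)
    {z : EuclideanSpace ℝ (Fin m)} (hz : z ∉ Metric.closedBall (0 : EuclideanSpace ℝ (Fin m)) ε) :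
    fderiv ℝ φ (ε⁻¹ • z) = 0 :=
  Function.notMem_support.mp fun h => hz (smul_mem_aux hε
    (closure_minimal hφ_supp Metric.isClosed_closedBall (support_fderiv_subset ℝ h)))

lemma contDiff_phiEps {m : ℕ} {φ : EuclideanSpace ℝ (Fin m) → ℝ} (hφ : ContDiff ℝ (⊤ : ℕ∞) φ) (ε : ℝ) :
    ContDiff ℝ (⊤ : ℕ∞) (fun w : EuclideanSpace ℝ (Fin m) => (ε ^ m)⁻¹ * φ (ε⁻¹ • w)) :=
  contDiff_const.mul (hφ.comp (contDiff_const_smul ε⁻¹))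

lemma hcs_phiEps {m : ℕ} {φ : EuclideanSpace ℝ (Fin m) → ℝ}
    (hφ_supp : Function.support φ ⊆ Metric.closedBall 0 1) {ε : ℝ} (hε : 0 < ε) :
    HasCompactSupport (fun w : EuclideanSpace ℝ (Fin m) => (ε ^ m)⁻¹ * φ (ε⁻¹ • w)) :=
  HasCompactSupport.intro (isCompact_closedBall 0 ε)
    (fun z hz => by rw [supp_scaled hφ_supp hε hz, mul_zero])

lemma fderiv_phiEps_apply {m : ℕ} {φ : EuclideanSpace ℝ (Fin m) → ℝ} (hφ : ContDiff ℝ (⊤ : ℕ∞) φ)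
    {ε : ℝ} (hε : 0 < ε) (z v : EuclideanSpace ℝ (Fin m)) :
    fderiv ℝ (fun w => (ε ^ m)⁻¹ * φ (ε⁻¹ • w)) z v
      = (ε ^ (m + 1))⁻¹ * fderiv ℝ φ (ε⁻¹ • z) v := by
  have hsm : HasFDerivAt (fun w : EuclideanSpace ℝ (Fin m) => ε⁻¹ • w)
      (ε⁻¹ • ContinuousLinearMap.id ℝ (EuclideanSpace ℝ (Fin m))) z :=
    (ContinuousLinearMap.id ℝ _).hasFDerivAt.const_smul ε⁻¹
  have h1 : HasFDerivAt (fun w : EuclideanSpace ℝ (Fin m) => φ (ε⁻¹ • w))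
      ((fderiv ℝ φ (ε⁻¹ • z)).comp
        (ε⁻¹ • ContinuousLinearMap.id ℝ (EuclideanSpace ℝ (Fin m)))) z :=
    (((hφ.differentiable (by simp)) (ε⁻¹ • z)).hasFDerivAt).comp z hsm
  have h2 : HasFDerivAt (fun w : EuclideanSpace ℝ (Fin m) => (ε ^ m)⁻¹ * φ (ε⁻¹ • w))
      ((ε ^ m)⁻¹ • ((fderiv ℝ φ (ε⁻¹ • z)).comp
        (ε⁻¹ • ContinuousLinearMap.id ℝ (EuclideanSpace ℝ (Fin m))))) z :=
    h1.const_mul _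
  rw [h2.fderiv]
  simp only [ContinuousLinearMap.coe_smul', Pi.smul_apply, ContinuousLinearMap.coe_comp',
    Function.comp_apply, ContinuousLinearMap.smul_apply, ContinuousLinearMap.id_apply,
    smul_eq_mul, pow_succ, mul_inv, inv_pow]
  rw [_root_.map_smul]
  simp only [smul_eq_mul]
  ring

lemma int_phiEps_one {m : ℕ} {φ : EuclideanSpace ℝ (Fin m) → ℝ}
    (hφ_supp : Function.support φ ⊆ Metric.closedBall 0 1)
    (hφ_int : ∫ x, φ x = 1) {ε : ℝ} (hε : 0 < ε) :
    ∫ w in Metric.closedBall (0 : EuclideanSpace ℝ (Fin m)) ε, (ε ^ m)⁻¹ * φ (ε⁻¹ • w) = 1 := by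
  rw [setIntegral_eq_integral_of_forall_compl_eq_zero
    (fun w hw => by rw [supp_scaled hφ_supp hε hw, mul_zero])]
  rw [integral_const_mul, MeasureTheory.Measure.integral_comp_smul volume φ ε⁻¹,
    finrank_euclideanSpace_fin, hφ_int, smul_eq_mul, mul_one, inv_pow, inv_inv,
    abs_of_pos (pow_pos hε m)]
  exact inv_mul_cancel₀ (ne_of_gt (pow_pos hε m))

lemma int_fderiv_scaled_zero {m : ℕ} {φ : EuclideanSpace ℝ (Fin m) → ℝ}
    (hφ : ContDiff ℝ (⊤ : ℕ∞) φ) (hφ_supp : Function.support φ ⊆ Metric.closedBall 0 1)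
    {ε : ℝ} (hε : 0 < ε) (v : EuclideanSpace ℝ (Fin m)) :
    ∫ z in Metric.closedBall (0 : EuclideanSpace ℝ (Fin m)) ε, fderiv ℝ φ (ε⁻¹ • z) v = 0 := by
  have hcs : HasCompactSupport φ :=
    HasCompactSupport.intro (isCompact_closedBall 0 1)
      (fun x hx => Function.notMem_support.mp fun h => hx (hφ_supp h))
  have hcs' : HasCompactSupport (fun x : EuclideanSpace ℝ (Fin m) => fderiv ℝ φ x v) :=
    HasCompactSupport.intro (isCompact_closedBall (0 : EuclideanSpace ℝ (Fin m)) 1)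
      (fun x hx => by
        have h0 : fderiv ℝ φ x = 0 := Function.notMem_support.mp fun h =>
          hx (closure_minimal hφ_supp Metric.isClosed_closedBall (support_fderiv_subset ℝ h))
        rw [h0]; rfl)
  have hcont' : Continuous (fun x : EuclideanSpace ℝ (Fin m) => fderiv ℝ φ x v) :=
    (hφ.continuous_fderiv (by simp)).clm_apply continuous_const
  have hmain : ∫ x : EuclideanSpace ℝ (Fin m), fderiv ℝ φ x v = 0 := by
    have h := integral_mul_fderiv_eq_neg_fderiv_mul_of_integrable (μ := volume)
      (f := fun _ : EuclideanSpace ℝ (Fin m) => (1 : ℝ)) (g := φ) (v := v)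
      (by simpa [fderiv_const] using
        (integrable_zero (EuclideanSpace ℝ (Fin m)) ℝ (volume : Measure (EuclideanSpace ℝ (Fin m)))))
      (by simpa using hcont'.integrable_of_hasCompactSupport hcs')
      (by simpa using hφ.continuous.integrable_of_hasCompactSupport hcs)
      (fun x _ => differentiableAt_const (1 : ℝ)) (fun x _ => hφ.differentiable (by simp) x)
    simpa [fderiv_const] using h
  rw [setIntegral_eq_integral_of_forall_compl_eq_zero
    (fun z hz => by rw [fderiv_scaled_zero hφ_supp hε hz]; rfl)]
  rw [MeasureTheory.Measure.integral_comp_smul volume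
    (fun u : EuclideanSpace ℝ (Fin m) => fderiv ℝ φ u v) ε⁻¹, hmain]
  simp

lemma sub_mem_ball {m : ℕ} {x_o x z : EuclideanSpace ℝ (Fin m)} {r ε : ℝ}
    (hx : dist x x_o + ε ≤ 2 * r)
    (hz : z ∈ Metric.closedBall (0 : EuclideanSpace ℝ (Fin m)) ε) :
    x - z ∈ Metric.closedBall x_o (2 * r) := by
  simp only [Metric.mem_closedBall, dist_zero_right] at hz ⊢
  have h1 : dist (x - z) x = ‖z‖ := by rw [dist_eq_norm]; simp
  calc dist (x - z) x_o ≤ dist (x - z) x + dist x x_o := dist_triangle _ _ _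
    _ ≤ 2 * r := by rw [h1]; linarith

lemma mollify_coord {m d : ℕ} {φ : EuclideanSpace ℝ (Fin m) → ℝ} (hφc : Continuous φ)
    {f : EuclideanSpace ℝ (Fin m) → EuclideanSpace ℝ (Fin d)}
    {x_o : EuclideanSpace ℝ (Fin m)} {r : ℝ}
    (hf_cont : ContinuousOn f (Metric.closedBall x_o (2 * r)))
    {ε : ℝ}
    {x : EuclideanSpace ℝ (Fin m)} (hx : dist x x_o + ε ≤ 2 * r) (i : Fin d) :
    mollify φ ε f x i
      = ∫ z in Metric.closedBall (0 : EuclideanSpace ℝ (Fin m)) ε,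
          ((ε ^ m)⁻¹ * φ (ε⁻¹ • z)) * f (x - z) i := by
  have hcont : ContinuousOn (fun z : EuclideanSpace ℝ (Fin m) =>
      ((ε ^ m)⁻¹ * φ (ε⁻¹ • z)) • f (x - z))
      (Metric.closedBall (0 : EuclideanSpace ℝ (Fin m)) ε) :=
    ((continuous_const.mul (hφc.comp (continuous_const_smul ε⁻¹))).continuousOn).smul
      (hf_cont.comp (continuous_const.sub continuous_id).continuousOn
        (fun z hz => sub_mem_ball hx hz))
  have hint : IntegrableOn (fun z : EuclideanSpace ℝ (Fin m) =>
      ((ε ^ m)⁻¹ * φ (ε⁻¹ • z)) • f (x - z))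
      (Metric.closedBall (0 : EuclideanSpace ℝ (Fin m)) ε) volume :=
    hcont.integrableOn_compact (isCompact_closedBall _ _)
  have h := (EuclideanSpace.proj (𝕜 := ℝ) i).integral_comp_comm hint
  simpa [mollify, PiLp.proj_apply, PiLp.smul_apply, smul_eq_mul] using h.symm

lemma mollify_eq_conv {m d : ℕ} {φ : EuclideanSpace ℝ (Fin m) → ℝ} (hφc : Continuous φ)
    (hφ_supp : Function.support φ ⊆ Metric.closedBall 0 1)
    {f : EuclideanSpace ℝ (Fin m) → EuclideanSpace ℝ (Fin d)}
    {x_o : EuclideanSpace ℝ (Fin m)} {r : ℝ}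
    (hf_cont : ContinuousOn f (Metric.closedBall x_o (2 * r)))
    {ε : ℝ} (hε : 0 < ε)
    {x : EuclideanSpace ℝ (Fin m)} (hx : x ∈ Metric.ball x_o (2 * r - ε)) (i : Fin d) :
    mollify φ ε f x i
      = (((Metric.closedBall x_o (2 * r)).indicator (fun u => f u i))
          ⋆[ContinuousLinearMap.mul ℝ ℝ, volume]
          (fun w : EuclideanSpace ℝ (Fin m) => (ε ^ m)⁻¹ * φ (ε⁻¹ • w))) x := by
  have hx' : dist x x_o + ε ≤ 2 * r := by
    have := Metric.mem_ball.mp hx; linarith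
  rw [mollify_coord hφc hf_cont hx' i]
  have h1 : Set.EqOn
      (fun z => ((ε ^ m)⁻¹ * φ (ε⁻¹ • z)) * f (x - z) i)
      (fun z => ((Metric.closedBall x_o (2 * r)).indicator (fun u => f u i)) (x - z)
        * ((ε ^ m)⁻¹ * φ (ε⁻¹ • z)))
      (Metric.closedBall (0 : EuclideanSpace ℝ (Fin m)) ε) := by
    intro z hz
    simp only [Set.indicator_of_mem (sub_mem_ball hx' hz)]
    ring
  rw [setIntegral_congr_fun measurableSet_closedBall h1]
  rw [setIntegral_eq_integral_of_forall_compl_eq_zero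
    (fun z hz => by rw [supp_scaled hφ_supp hε hz, mul_zero, mul_zero])]
  have h2 := MeasureTheory.integral_sub_left_eq_self
    (fun t : EuclideanSpace ℝ (Fin m) =>
      ((Metric.closedBall x_o (2 * r)).indicator (fun u => f u i)) t
        * ((ε ^ m)⁻¹ * φ (ε⁻¹ • (x - t)))) volume x
  simp only [sub_sub_cancel] at h2
  rw [h2, convolution_def]
  simp only [ContinuousLinearMap.mul_apply']

lemma mollify_fderiv {m d : ℕ} {φ : EuclideanSpace ℝ (Fin m) → ℝ} (hφ : ContDiff ℝ (⊤ : ℕ∞) φ)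
    (hφ_supp : Function.support φ ⊆ Metric.closedBall 0 1)
    {f : EuclideanSpace ℝ (Fin m) → EuclideanSpace ℝ (Fin d)}
    {x_o : EuclideanSpace ℝ (Fin m)} {r : ℝ}
    (hf_cont : ContinuousOn f (Metric.closedBall x_o (2 * r)))
    {ε : ℝ} (hε : 0 < ε) (hεr : ε < r)
    {p : EuclideanSpace ℝ (Fin m)} (hp : p ∈ Metric.closedBall x_o r) (i : Fin d)
    (v : EuclideanSpace ℝ (Fin m)) :
    fderiv ℝ (fun q => mollify φ ε f q i) p v
      = (ε ^ (m + 1))⁻¹ * ∫ z in Metric.closedBall (0 : EuclideanSpace ℝ (Fin m)) ε,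
          f (p - z) i * fderiv ℝ φ (ε⁻¹ • z) v := by
  have hr : 0 < r := hε.trans hεr
  have hp' : dist p x_o ≤ r := Metric.mem_closedBall.mp hp
  have hp'' : dist p x_o + ε ≤ 2 * r := by linarith
  have hpball : p ∈ Metric.ball x_o (2 * r - ε) := by
    simp only [Metric.mem_ball]; linarith
  have hFb_int : Integrable ((Metric.closedBall x_o (2 * r)).indicator (fun u => f u i))
      volume := by
    rw [integrable_indicator_iff measurableSet_closedBall]
    exact ((EuclideanSpace.proj (𝕜 := ℝ) i).continuous.comp_continuousOn
      hf_cont).integrableOn_compact (isCompact_closedBall _ _)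
  have hφε_cd : ContDiff ℝ (⊤ : ℕ∞) (fun w : EuclideanSpace ℝ (Fin m) => (ε ^ m)⁻¹ * φ (ε⁻¹ • w)) :=
    contDiff_phiEps hφ ε
  have hφε_cs : HasCompactSupport (fun w : EuclideanSpace ℝ (Fin m) =>
      (ε ^ m)⁻¹ * φ (ε⁻¹ • w)) := hcs_phiEps hφ_supp hε
  have heq : (fun q => mollify φ ε f q i) =ᶠ[nhds p]
      (((Metric.closedBall x_o (2 * r)).indicator (fun u => f u i))
        ⋆[ContinuousLinearMap.mul ℝ ℝ, volume]
        (fun w : EuclideanSpace ℝ (Fin m) => (ε ^ m)⁻¹ * φ (ε⁻¹ • w))) := by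
    filter_upwards [Metric.isOpen_ball.mem_nhds hpball] with x hx
    exact mollify_eq_conv hφ.continuous hφ_supp hf_cont hε hx i
  have hderiv : HasFDerivAt
      (((Metric.closedBall x_o (2 * r)).indicator (fun u => f u i))
        ⋆[ContinuousLinearMap.mul ℝ ℝ, volume]
        (fun w : EuclideanSpace ℝ (Fin m) => (ε ^ m)⁻¹ * φ (ε⁻¹ • w)))
      ((((Metric.closedBall x_o (2 * r)).indicator (fun u => f u i))
        ⋆[(ContinuousLinearMap.mul ℝ ℝ).precompR (EuclideanSpace ℝ (Fin m)), volume]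
        (fderiv ℝ (fun w : EuclideanSpace ℝ (Fin m) => (ε ^ m)⁻¹ * φ (ε⁻¹ • w)))) p) p :=
    hφε_cs.hasFDerivAt_convolution_right _ hFb_int.locallyIntegrable (hφε_cd.of_le (by simp)) p
  rw [heq.fderiv_eq, hderiv.fderiv]
  rw [convolution_precompR_apply _ hFb_int.locallyIntegrable (hφε_cs.fderiv ℝ)
    (hφε_cd.continuous_fderiv (by simp)) p v]
  rw [convolution_def]
  simp only [ContinuousLinearMap.mul_apply']
  have hsupp_φε : Function.support (fun w : EuclideanSpace ℝ (Fin m) =>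
      (ε ^ m)⁻¹ * φ (ε⁻¹ • w)) ⊆ Metric.closedBall (0 : EuclideanSpace ℝ (Fin m)) ε := by
    intro z hzs
    by_contra hzc
    exact hzs (by simp [supp_scaled hφ_supp hε hzc])
  have hfd0 : ∀ z ∉ Metric.closedBall (0 : EuclideanSpace ℝ (Fin m)) ε,
      fderiv ℝ (fun w : EuclideanSpace ℝ (Fin m) => (ε ^ m)⁻¹ * φ (ε⁻¹ • w)) z = 0 :=
    fun z hz => Function.notMem_support.mp fun hmem => hz
      (closure_minimal hsupp_φε Metric.isClosed_closedBall (support_fderiv_subset ℝ hmem))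
  have h2 := MeasureTheory.integral_sub_left_eq_self
    (fun z : EuclideanSpace ℝ (Fin m) =>
      ((Metric.closedBall x_o (2 * r)).indicator (fun u => f u i)) (p - z)
        * fderiv ℝ (fun w : EuclideanSpace ℝ (Fin m) => (ε ^ m)⁻¹ * φ (ε⁻¹ • w)) z v)
    volume p
  simp only [sub_sub_cancel] at h2
  rw [h2]
  rw [← setIntegral_eq_integral_of_forall_compl_eq_zero
    (s := Metric.closedBall (0 : EuclideanSpace ℝ (Fin m)) ε)
    (fun z hz => by rw [hfd0 z hz]; simp)]
  rw [← integral_const_mul]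
  refine setIntegral_congr_fun measurableSet_closedBall (fun z hz => ?_)
  rw [Set.indicator_of_mem (sub_mem_ball hp'' hz), fderiv_phiEps_apply hφ hε z v]
  ring

end Statement13Aux

theorem statement13 (n m : ℕ)
    -- the standard mollifier `φ`
    (φ : EuclideanSpace ℝ (Fin m) → ℝ) (hφ_smooth : ContDiff ℝ (⊤ : ℕ∞) φ)
    (hφ_supp : Function.support φ ⊆ Metric.closedBall 0 1)
    (hφ_int : ∫ x, φ x = 1)
    (U : Set (EuclideanSpace ℝ (Fin m))) (hU : IsOpen U)
    (f : EuclideanSpace ℝ (Fin m) → EuclideanSpace ℝ (Fin (2 * n + 1)))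
    (x_o : EuclideanSpace ℝ (Fin m)) (r : ℝ)
    (hball : Metric.closedBall x_o (2 * r) ⊆ U)
    -- `f` is continuous and bounded on `B(x_o, 2r)`
    (hf_cont : ContinuousOn f (Metric.closedBall x_o (2 * r)))
    (hf_bdd : ∃ M : ℝ, ∀ q ∈ Metric.closedBall x_o (2 * r), ‖f q‖ ≤ M) :
    ∀ p ∈ Metric.closedBall x_o r, ∀ ε : ℝ, 0 < ε → ε < r →
      ∀ v : EuclideanSpace ℝ (Fin m),
        -- `(f_ε^*α)(p)(v)`:
        fderiv ℝ (fun q => mollify φ ε f q (tIdx n)) p v +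
          2 * ∑ j : Fin n,
            (mollify φ ε f p (xIdx n j) *
                fderiv ℝ (fun q => mollify φ ε f q (yIdx n j)) p v -
              mollify φ ε f p (yIdx n j) *
                fderiv ℝ (fun q => mollify φ ε f q (xIdx n j)) p v) =
        -- `= ε^{-m-1} ∫∫ φ(f(p-z), f(p-w)) φ_ε(w) (Dφ(z/ε)·v) dw dz`:
        (ε ^ (m + 1))⁻¹ *
          ∫ z in Metric.closedBall (0 : EuclideanSpace ℝ (Fin m)) ε,
            ∫ w in Metric.closedBall (0 : EuclideanSpace ℝ (Fin m)) ε,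
              phiH n (f (p - z)) (f (p - w)) * ((ε ^ m)⁻¹ * φ (ε⁻¹ • w)) *
                fderiv ℝ φ (ε⁻¹ • z) v := by
  intro p hp ε hε hεr v
  have hr : 0 < r := hε.trans hεr
  have hp' : dist p x_o ≤ r := Metric.mem_closedBall.mp hp
  have hp'' : dist p x_o + ε ≤ 2 * r := by linarith
  -- basic continuity facts
  have hmapsp : ∀ z ∈ Metric.closedBall (0 : EuclideanSpace ℝ (Fin m)) ε,
      p - z ∈ Metric.closedBall x_o (2 * r) := fun z hz => Statement13Aux.sub_mem_ball hp'' hz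
  have hcoord : ∀ i : Fin (2 * n + 1),
      ContinuousOn (fun w : EuclideanSpace ℝ (Fin m) => f (p - w) i)
        (Metric.closedBall (0 : EuclideanSpace ℝ (Fin m)) ε) := fun i =>
    (EuclideanSpace.proj (𝕜 := ℝ) i).continuous.comp_continuousOn
      (hf_cont.comp (continuous_const.sub continuous_id).continuousOn hmapsp)
  have hKc : Continuous (fun w : EuclideanSpace ℝ (Fin m) => (ε ^ m)⁻¹ * φ (ε⁻¹ • w)) :=
    continuous_const.mul (hφ_smooth.continuous.comp (continuous_const_smul ε⁻¹))
  have hKint : IntegrableOn (fun w : EuclideanSpace ℝ (Fin m) => (ε ^ m)⁻¹ * φ (ε⁻¹ • w))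
      (Metric.closedBall (0 : EuclideanSpace ℝ (Fin m)) ε) volume :=
    hKc.continuousOn.integrableOn_compact (isCompact_closedBall _ _)
  have hG_int : ∀ i : Fin (2 * n + 1),
      IntegrableOn (fun w : EuclideanSpace ℝ (Fin m) => ((ε ^ m)⁻¹ * φ (ε⁻¹ • w)) * f (p - w) i)
        (Metric.closedBall (0 : EuclideanSpace ℝ (Fin m)) ε) volume :=
    fun i => (hKc.continuousOn.mul (hcoord i)).integrableOn_compact (isCompact_closedBall _ _)
  have hDc : Continuous (fun z : EuclideanSpace ℝ (Fin m) => fderiv ℝ φ (ε⁻¹ • z) v) :=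
    ((hφ_smooth.continuous_fderiv (by simp)).comp (continuous_const_smul ε⁻¹)).clm_apply
      continuous_const
  have hI_int : ∀ i : Fin (2 * n + 1),
      IntegrableOn (fun z : EuclideanSpace ℝ (Fin m) => f (p - z) i * fderiv ℝ φ (ε⁻¹ • z) v)
        (Metric.closedBall (0 : EuclideanSpace ℝ (Fin m)) ε) volume :=
    fun i => ((hcoord i).mul hDc.continuousOn).integrableOn_compact (isCompact_closedBall _ _)
  have hD_int : IntegrableOn (fun z : EuclideanSpace ℝ (Fin m) => fderiv ℝ φ (ε⁻¹ • z) v)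
      (Metric.closedBall (0 : EuclideanSpace ℝ (Fin m)) ε) volume :=
    hDc.continuousOn.integrableOn_compact (isCompact_closedBall _ _)
  -- values of the mollification
  have hval : ∀ i : Fin (2 * n + 1), mollify φ ε f p i
      = ∫ w in Metric.closedBall (0 : EuclideanSpace ℝ (Fin m)) ε,
          ((ε ^ m)⁻¹ * φ (ε⁻¹ • w)) * f (p - w) i :=
    fun i => Statement13Aux.mollify_coord hφ_smooth.continuous hf_cont hp'' i
  -- derivatives of the mollification
  have hder : ∀ i : Fin (2 * n + 1), fderiv ℝ (fun q => mollify φ ε f q i) p v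
      = (ε ^ (m + 1))⁻¹ * ∫ z in Metric.closedBall (0 : EuclideanSpace ℝ (Fin m)) ε,
          f (p - z) i * fderiv ℝ φ (ε⁻¹ • z) v :=
    fun i => Statement13Aux.mollify_fderiv hφ_smooth hφ_supp hf_cont hε hεr hp i v
  -- the inner integral
  have hInner : ∀ z : EuclideanSpace ℝ (Fin m),
      (∫ w in Metric.closedBall (0 : EuclideanSpace ℝ (Fin m)) ε,
        phiH n (f (p - z)) (f (p - w)) * ((ε ^ m)⁻¹ * φ (ε⁻¹ • w)) * fderiv ℝ φ (ε⁻¹ • z) v)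
      = (f (p - z) (tIdx n) - mollify φ ε f p (tIdx n)
          + 2 * ∑ j : Fin n, (mollify φ ε f p (xIdx n j) * f (p - z) (yIdx n j)
              - f (p - z) (xIdx n j) * mollify φ ε f p (yIdx n j)))
        * fderiv ℝ φ (ε⁻¹ • z) v := by
    intro z
    rw [integral_mul_const]
    congr 1
    have hpt : Set.EqOn
        (fun w => phiH n (f (p - z)) (f (p - w)) * ((ε ^ m)⁻¹ * φ (ε⁻¹ • w)))
        (fun w => f (p - z) (tIdx n) * ((ε ^ m)⁻¹ * φ (ε⁻¹ • w))
          - ((ε ^ m)⁻¹ * φ (ε⁻¹ • w)) * f (p - w) (tIdx n)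
          + 2 * ∑ j : Fin n,
              ((((ε ^ m)⁻¹ * φ (ε⁻¹ • w)) * f (p - w) (xIdx n j)) * f (p - z) (yIdx n j)
                - f (p - z) (xIdx n j) * (((ε ^ m)⁻¹ * φ (ε⁻¹ • w)) * f (p - w) (yIdx n j))))
        (Metric.closedBall (0 : EuclideanSpace ℝ (Fin m)) ε) := by
      intro w _
      simp only [phiH]
      have hs : (∑ j : Fin n, (f (p - w) (xIdx n j) * f (p - z) (yIdx n j)
            - f (p - z) (xIdx n j) * f (p - w) (yIdx n j))) * ((ε ^ m)⁻¹ * φ (ε⁻¹ • w))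
          = ∑ j : Fin n,
              ((((ε ^ m)⁻¹ * φ (ε⁻¹ • w)) * f (p - w) (xIdx n j)) * f (p - z) (yIdx n j)
                - f (p - z) (xIdx n j) * (((ε ^ m)⁻¹ * φ (ε⁻¹ • w)) * f (p - w) (yIdx n j))) := by
        rw [Finset.sum_mul]
        exact Finset.sum_congr rfl fun j _ => by ring
      rw [← hs]
      ring
    rw [setIntegral_congr_fun measurableSet_closedBall hpt]
    have hintS : ∀ j : Fin n, IntegrableOn (fun w : EuclideanSpace ℝ (Fin m) =>
        (((ε ^ m)⁻¹ * φ (ε⁻¹ • w)) * f (p - w) (xIdx n j)) * f (p - z) (yIdx n j)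
          - f (p - z) (xIdx n j) * (((ε ^ m)⁻¹ * φ (ε⁻¹ • w)) * f (p - w) (yIdx n j)))
        (Metric.closedBall (0 : EuclideanSpace ℝ (Fin m)) ε) volume :=
      fun j => (Integrable.mul_const (hG_int _) _).sub (Integrable.const_mul (hG_int _) _)
    have hint1 : IntegrableOn (fun w : EuclideanSpace ℝ (Fin m) =>
        f (p - z) (tIdx n) * ((ε ^ m)⁻¹ * φ (ε⁻¹ • w))
          - ((ε ^ m)⁻¹ * φ (ε⁻¹ • w)) * f (p - w) (tIdx n))
        (Metric.closedBall (0 : EuclideanSpace ℝ (Fin m)) ε) volume :=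
      (Integrable.const_mul hKint _).sub (hG_int _)
    have hintS' : IntegrableOn (fun w : EuclideanSpace ℝ (Fin m) => ∑ j : Fin n,
        ((((ε ^ m)⁻¹ * φ (ε⁻¹ • w)) * f (p - w) (xIdx n j)) * f (p - z) (yIdx n j)
          - f (p - z) (xIdx n j) * (((ε ^ m)⁻¹ * φ (ε⁻¹ • w)) * f (p - w) (yIdx n j))))
        (Metric.closedBall (0 : EuclideanSpace ℝ (Fin m)) ε) volume :=
      integrable_finset_sum _ fun j _ => hintS j
    rw [integral_add hint1 (Integrable.const_mul hintS' 2),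
      integral_sub (Integrable.const_mul hKint _) (hG_int _),
      integral_const_mul (f (p - z) (tIdx n)), integral_const_mul 2,
      integral_finset_sum _ (fun j _ => hintS j)]
    rw [show (∑ j : Fin n, ∫ w in Metric.closedBall (0 : EuclideanSpace ℝ (Fin m)) ε,
          ((((ε ^ m)⁻¹ * φ (ε⁻¹ • w)) * f (p - w) (xIdx n j)) * f (p - z) (yIdx n j)
            - f (p - z) (xIdx n j) * (((ε ^ m)⁻¹ * φ (ε⁻¹ • w)) * f (p - w) (yIdx n j))))
        = ∑ j : Fin n, (mollify φ ε f p (xIdx n j) * f (p - z) (yIdx n j)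
            - f (p - z) (xIdx n j) * mollify φ ε f p (yIdx n j)) from
      Finset.sum_congr rfl fun j _ => by
        rw [integral_sub (Integrable.mul_const (hG_int _) _) (Integrable.const_mul (hG_int _) _),
          integral_mul_const, integral_const_mul, ← hval, ← hval]]
    rw [Statement13Aux.int_phiEps_one hφ_supp hφ_int hε, ← hval]
    ring
  -- the outer integral
  have hOuter : (∫ z in Metric.closedBall (0 : EuclideanSpace ℝ (Fin m)) ε,
        ∫ w in Metric.closedBall (0 : EuclideanSpace ℝ (Fin m)) ε,
          phiH n (f (p - z)) (f (p - w)) * ((ε ^ m)⁻¹ * φ (ε⁻¹ • w)) * fderiv ℝ φ (ε⁻¹ • z) v)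
      = (∫ z in Metric.closedBall (0 : EuclideanSpace ℝ (Fin m)) ε,
          f (p - z) (tIdx n) * fderiv ℝ φ (ε⁻¹ • z) v)
        - mollify φ ε f p (tIdx n)
            * (∫ z in Metric.closedBall (0 : EuclideanSpace ℝ (Fin m)) ε,
                fderiv ℝ φ (ε⁻¹ • z) v)
        + 2 * ∑ j : Fin n,
            (mollify φ ε f p (xIdx n j)
                * (∫ z in Metric.closedBall (0 : EuclideanSpace ℝ (Fin m)) ε,
                    f (p - z) (yIdx n j) * fderiv ℝ φ (ε⁻¹ • z) v)
              - mollify φ ε f p (yIdx n j)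
                * (∫ z in Metric.closedBall (0 : EuclideanSpace ℝ (Fin m)) ε,
                    f (p - z) (xIdx n j) * fderiv ℝ φ (ε⁻¹ • z) v)) := by
    rw [setIntegral_congr_fun measurableSet_closedBall (fun z _ => hInner z)]
    have hpt2 : Set.EqOn
        (fun z => (f (p - z) (tIdx n) - mollify φ ε f p (tIdx n)
            + 2 * ∑ j : Fin n, (mollify φ ε f p (xIdx n j) * f (p - z) (yIdx n j)
                - f (p - z) (xIdx n j) * mollify φ ε f p (yIdx n j)))
          * fderiv ℝ φ (ε⁻¹ • z) v)
        (fun z => f (p - z) (tIdx n) * fderiv ℝ φ (ε⁻¹ • z) v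
          - mollify φ ε f p (tIdx n) * fderiv ℝ φ (ε⁻¹ • z) v
          + 2 * ∑ j : Fin n,
              (mollify φ ε f p (xIdx n j) * (f (p - z) (yIdx n j) * fderiv ℝ φ (ε⁻¹ • z) v)
                - mollify φ ε f p (yIdx n j) * (f (p - z) (xIdx n j) * fderiv ℝ φ (ε⁻¹ • z) v)))
        (Metric.closedBall (0 : EuclideanSpace ℝ (Fin m)) ε) := by
      intro z _
      have hs : (∑ j : Fin n, (mollify φ ε f p (xIdx n j) * f (p - z) (yIdx n j)
            - f (p - z) (xIdx n j) * mollify φ ε f p (yIdx n j))) * fderiv ℝ φ (ε⁻¹ • z) v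
          = ∑ j : Fin n,
              (mollify φ ε f p (xIdx n j) * (f (p - z) (yIdx n j) * fderiv ℝ φ (ε⁻¹ • z) v)
                - mollify φ ε f p (yIdx n j) * (f (p - z) (xIdx n j) * fderiv ℝ φ (ε⁻¹ • z) v)) := by
        rw [Finset.sum_mul]
        exact Finset.sum_congr rfl fun j _ => by ring
      simp only
      rw [← hs]
      ring
    rw [setIntegral_congr_fun measurableSet_closedBall hpt2]
    have hintT : ∀ j : Fin n, IntegrableOn (fun z : EuclideanSpace ℝ (Fin m) =>
        mollify φ ε f p (xIdx n j) * (f (p - z) (yIdx n j) * fderiv ℝ φ (ε⁻¹ • z) v)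
          - mollify φ ε f p (yIdx n j) * (f (p - z) (xIdx n j) * fderiv ℝ φ (ε⁻¹ • z) v))
        (Metric.closedBall (0 : EuclideanSpace ℝ (Fin m)) ε) volume :=
      fun j => (Integrable.const_mul (hI_int _) _).sub (Integrable.const_mul (hI_int _) _)
    have hint1 : IntegrableOn (fun z : EuclideanSpace ℝ (Fin m) =>
        f (p - z) (tIdx n) * fderiv ℝ φ (ε⁻¹ • z) v
          - mollify φ ε f p (tIdx n) * fderiv ℝ φ (ε⁻¹ • z) v)
        (Metric.closedBall (0 : EuclideanSpace ℝ (Fin m)) ε) volume :=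
      (hI_int _).sub (Integrable.const_mul hD_int _)
    have hintT' : IntegrableOn (fun z : EuclideanSpace ℝ (Fin m) => ∑ j : Fin n,
        (mollify φ ε f p (xIdx n j) * (f (p - z) (yIdx n j) * fderiv ℝ φ (ε⁻¹ • z) v)
          - mollify φ ε f p (yIdx n j) * (f (p - z) (xIdx n j) * fderiv ℝ φ (ε⁻¹ • z) v)))
        (Metric.closedBall (0 : EuclideanSpace ℝ (Fin m)) ε) volume :=
      integrable_finset_sum _ fun j _ => hintT j
    rw [integral_add hint1 (Integrable.const_mul hintT' 2),
      integral_sub (hI_int _) (Integrable.const_mul hD_int _),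
      integral_const_mul (mollify φ ε f p (tIdx n)), integral_const_mul 2,
      integral_finset_sum _ (fun j _ => hintT j)]
    rw [show (∑ j : Fin n, ∫ z in Metric.closedBall (0 : EuclideanSpace ℝ (Fin m)) ε,
          (mollify φ ε f p (xIdx n j) * (f (p - z) (yIdx n j) * fderiv ℝ φ (ε⁻¹ • z) v)
            - mollify φ ε f p (yIdx n j) * (f (p - z) (xIdx n j) * fderiv ℝ φ (ε⁻¹ • z) v)))
        = ∑ j : Fin n,
            (mollify φ ε f p (xIdx n j)
                * (∫ z in Metric.closedBall (0 : EuclideanSpace ℝ (Fin m)) ε,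
                    f (p - z) (yIdx n j) * fderiv ℝ φ (ε⁻¹ • z) v)
              - mollify φ ε f p (yIdx n j)
                * (∫ z in Metric.closedBall (0 : EuclideanSpace ℝ (Fin m)) ε,
                    f (p - z) (xIdx n j) * fderiv ℝ φ (ε⁻¹ • z) v)) from
      Finset.sum_congr rfl fun j _ => by
        rw [integral_sub (Integrable.const_mul (hI_int _) _) (Integrable.const_mul (hI_int _) _),
          integral_const_mul, integral_const_mul]]
  -- assemble
  rw [hOuter, Statement13Aux.int_fderiv_scaled_zero hφ_smooth hφ_supp hε v]
  simp only [hder]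
  rw [show (∑ j : Fin n,
        (mollify φ ε f p (xIdx n j)
            * ((ε ^ (m + 1))⁻¹ * ∫ z in Metric.closedBall (0 : EuclideanSpace ℝ (Fin m)) ε,
                f (p - z) (yIdx n j) * fderiv ℝ φ (ε⁻¹ • z) v)
          - mollify φ ε f p (yIdx n j)
            * ((ε ^ (m + 1))⁻¹ * ∫ z in Metric.closedBall (0 : EuclideanSpace ℝ (Fin m)) ε,
                f (p - z) (xIdx n j) * fderiv ℝ φ (ε⁻¹ • z) v)))
      = (ε ^ (m + 1))⁻¹ * ∑ j : Fin n,
          (mollify φ ε f p (xIdx n j)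
              * (∫ z in Metric.closedBall (0 : EuclideanSpace ℝ (Fin m)) ε,
                  f (p - z) (yIdx n j) * fderiv ℝ φ (ε⁻¹ • z) v)
            - mollify φ ε f p (yIdx n j)
              * (∫ z in Metric.closedBall (0 : EuclideanSpace ℝ (Fin m)) ε,
                  f (p - z) (xIdx n j) * fderiv ℝ φ (ε⁻¹ • z) v)) from by
    rw [Finset.mul_sum]
    exact Finset.sum_congr rfl fun j _ => by ring]
  ring
end
end
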